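/- arXiv:2303.08687 — 7 statements merged into one kernel-verified Lean document; each statement's English description precedes it below -/
import Mathlib

section
/- Let C ⊆ F_{q^m}^n be an F_{q^m}-linear code. Then Tr(C)^{⋆2} ⊆ Σ_{i=0}^{⌊m/2⌋} Tr(C ⋆ C^{q^i}), where the right-hand side is the sum of the F_q-subspaces Tr(C ⋆ C^{q^i}) of F_q^n for i = 0, 1, …, ⌊m/2⌋. -/
/-!
If `x ^ q ^ m = x` for all `x`, the sum `Tr x = ∑_{i<m} x ^ q ^ i` is invariant under `x ↦ x ^ q`,
hence `Tr a * Tr b = ∑_{k<m} Tr (a * b ^ q ^ k)`. Raising `a * b ^ q ^ k` to the power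
`q ^ (m - k)` shows `Tr (a * b ^ q ^ k) = Tr (b * a ^ q ^ (m - k))`, so after possibly swapping
the two codewords every term has `k ≤ m / 2`. All of this happens in the ring `Fin n → F_{q^m}`,
where powers and the trace act coordinatewise.
-/


open Module

/-- The Schur (componentwise) product over `R` of two `R`-submodules of a commutative
`R`-algebra: the `R`-span of the set of products. For codes in `K^n` (with the pointwise
ring structure) this is the usual Schur product `C ⋆ D`. -/
def schurProd (R : Type*) {A : Type*} [CommSemiring R] [CommSemiring A] [Algebra R A]
    (C D : Submodule R A) : Submodule R A :=
  Submodule.span R {x : A | ∃ c ∈ C, ∃ d ∈ D, x = c * d}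

/-- The code `C^r := {(c₁^r, …, c_n^r) : c ∈ C}` of coordinatewise `r`-th powers
(as the span of that set). -/
def powCode {K : Type*} [Field K] {n : ℕ} (C : Submodule K (Fin n → K)) (r : ℕ) :
    Submodule K (Fin n → K) :=
  Submodule.span K {x : Fin n → K | ∃ c ∈ C, x = fun j => c j ^ r}

/-- The trace code `Tr(C)` over `F_q` of an `F_{q^m}`-linear code `C`: the `F_q`-span of the
coordinatewise traces `Tr(c) = (Tr(c₁), …, Tr(c_n))`, where `Tr(x) = x + x^q + ⋯ + x^{q^{m-1}}`. -/
def traceCode (q m : ℕ) (Fq : Type*) [Field Fq] {Fqm : Type*} [Field Fqm] [Algebra Fq Fqm]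
    {n : ℕ} (C : Submodule Fqm (Fin n → Fqm)) : Submodule Fq (Fin n → Fqm) :=
  Submodule.span Fq
    {x : Fin n → Fqm | ∃ c ∈ C, x = fun j => ∑ i ∈ Finset.range m, c j ^ q ^ i}

open Finset

/-- In the pointwise ring `Fin n → F_{q^m}` this is the coordinatewise trace `Tr`. -/
def frobSum {A : Type*} [CommSemiring A] (q m : ℕ) (x : A) : A :=
  ∑ i ∈ range m, x ^ q ^ i

section FrobSum

variable {A : Type*} [CommSemiring A] {q m : ℕ}

theorem frobSum_pow (hA : ∀ x : A, x ^ q ^ m = x) (x : A) :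
    frobSum q m (x ^ q) = frobSum q m x := by
  rcases m with _ | m
  · rfl
  calc frobSum q (m + 1) (x ^ q)
      = ∑ i ∈ range m, x ^ q ^ (i + 1) + x ^ q ^ (m + 1) := by
        simp only [frobSum, sum_range_succ, ← pow_mul, pow_succ']
    _ = frobSum q (m + 1) x := by
        rw [hA, frobSum, sum_range_succ' _ m, pow_zero, pow_one]

theorem frobSum_pow_pow (hA : ∀ x : A, x ^ q ^ m = x) (x : A) (r : ℕ) :
    frobSum q m (x ^ q ^ r) = frobSum q m x := by
  induction r with
  | zero => rw [pow_zero, pow_one]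
  | succ r ih => rw [pow_succ, pow_mul, frobSum_pow hA, ih]

theorem frobSum_mul_frobSum (hA : ∀ x : A, x ^ q ^ m = x) (a b : A) :
    frobSum q m a * frobSum q m b = ∑ k ∈ range m, frobSum q m (a * b ^ q ^ k) := by
  have hterm : ∀ i k, (a * b ^ q ^ k) ^ q ^ i = a ^ q ^ i * (b ^ q ^ i) ^ q ^ k := by
    intro i k
    rw [mul_pow, ← pow_mul, ← pow_mul, mul_comm (q ^ k)]
  simp only [frobSum, hterm]
  rw [sum_comm, sum_mul]
  refine sum_congr rfl fun i _ => ?_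
  rw [← mul_sum]
  exact congrArg (a ^ q ^ i * ·) (frobSum_pow_pow hA b i).symm

/-- This pairs the terms `k` and `m - k` of `frobSum_mul_frobSum`, so only `k ≤ m / 2` is
needed. -/
theorem frobSum_mul_pow_comm (hA : ∀ x : A, x ^ q ^ m = x) (a b : A) {k : ℕ} (hk : k ≤ m) :
    frobSum q m (a * b ^ q ^ k) = frobSum q m (b * a ^ q ^ (m - k)) := by
  rw [← frobSum_pow_pow hA (a * b ^ q ^ k) (m - k), mul_pow, ← pow_mul, ← pow_add,
    Nat.add_sub_cancel' hk, hA, mul_comm]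

end FrobSum

theorem schurProd_eq_mul (R : Type*) {A : Type*} [CommSemiring R] [CommSemiring A]
    [Algebra R A] (C D : Submodule R A) : schurProd R C D = C * D := by
  rw [Submodule.mul_eq_span_mul_set, schurProd]
  congr 1
  ext x
  simp only [Set.mem_ofPred_eq, Set.mem_mul, SetLike.mem_coe, eq_comm]

section Codes

variable {q m n : ℕ} {Fq Fqm : Type*} [Field Fq] [Field Fqm] [Algebra Fq Fqm]

theorem traceCode_eq_span_image (C : Submodule Fqm (Fin n → Fqm)) :
    traceCode q m Fq C = Submodule.span Fq (frobSum q m '' C) := by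
  rw [traceCode]
  congr 1
  ext x
  simp only [Set.mem_ofPred_eq, Set.mem_image, SetLike.mem_coe, eq_comm (a := x)]
  refine exists_congr fun c => and_congr_right fun _ => ?_
  rw [funext_iff, funext_iff]
  simp only [frobSum, Finset.sum_apply, Pi.pow_apply]

theorem frobSum_mul_pow_mem_traceCode {C : Submodule Fqm (Fin n → Fqm)} {c d : Fin n → Fqm}
    (hc : c ∈ C) (hd : d ∈ C) (r : ℕ) :
    frobSum q m (c * d ^ r) ∈ traceCode q m Fq (schurProd Fqm C (powCode C r)) := by
  rw [traceCode_eq_span_image]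
  refine Submodule.subset_span ⟨c * d ^ r, ?_, rfl⟩
  rw [schurProd_eq_mul]
  exact Submodule.mul_mem_mul hc (Submodule.subset_span ⟨d, hd, rfl⟩)

end Codes

theorem stmt_2_general (q m n : ℕ) (Fq Fqm : Type*) [Field Fq] [Field Fqm]
    [Fintype Fqm] [Algebra Fq Fqm]
    (hqm : Fintype.card Fqm = q ^ m)
    (C : Submodule Fqm (Fin n → Fqm)) :
    schurProd Fq (traceCode q m Fq C) (traceCode q m Fq C) ≤
      ∑ i ∈ Finset.range (m / 2 + 1),
        traceCode q m Fq (schurProd Fqm C (powCode C (q ^ i))) := by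
  have hA : ∀ x : Fin n → Fqm, x ^ q ^ m = x := fun x =>
    funext fun j => hqm ▸ FiniteField.pow_card (x j)
  have hmem : ∀ k ≤ m / 2, ∀ c ∈ C, ∀ d ∈ C, frobSum q m (c * d ^ q ^ k) ∈
      ∑ i ∈ range (m / 2 + 1), traceCode q m Fq (schurProd Fqm C (powCode C (q ^ i))) :=
    fun k hk c hc d hd =>
      single_le_sum_of_canonicallyOrdered (f := fun i => traceCode q m Fq
        (schurProd Fqm C (powCode C (q ^ i)))) (mem_range.2 (Nat.lt_succ_of_le hk))
        (frobSum_mul_pow_mem_traceCode hc hd _)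
  rw [schurProd_eq_mul, traceCode_eq_span_image, Submodule.span_mul_span, Submodule.span_le]
  rintro _ ⟨_, ⟨c, hc, rfl⟩, _, ⟨d, hd, rfl⟩, rfl⟩
  beta_reduce
  rw [SetLike.mem_coe, frobSum_mul_frobSum hA]
  refine Submodule.sum_mem _ fun k hk => ?_
  rcases le_or_gt k (m / 2) with hk_half | hk_half
  · exact hmem k hk_half c hc d hd
  · rw [frobSum_mul_pow_comm hA c d (mem_range.1 hk).le]
    exact hmem (m - k) (by omega) d hd c hc

/-- For an `F_{q^m}`-linear code `C ⊆ F_{q^m}^n`,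
`Tr(C)^{⋆2} ⊆ Σ_{i=0}^{⌊m/2⌋} Tr(C ⋆ C^{q^i})`. -/
theorem stmt_2 (q m n : ℕ) (hm : 0 < m) (Fq Fqm : Type*) [Field Fq] [Field Fqm]
    [Fintype Fq] [Fintype Fqm] [Algebra Fq Fqm]
    (hq : Fintype.card Fq = q) (hqm : Fintype.card Fqm = q ^ m)
    (C : Submodule Fqm (Fin n → Fqm)) :
    schurProd Fq (traceCode q m Fq C) (traceCode q m Fq C) ≤
      ∑ i ∈ Finset.range (m / 2 + 1),
        traceCode q m Fq (schurProd Fqm C (powCode C (q ^ i))) :=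
  stmt_2_general q m n Fq Fqm hqm C
end

section
/- Let C ⊆ F_{q^m}^n be an F_{q^m}-linear code of dimension k. Then dim_{F_q} Tr(C)^{⋆2} ≤ m · dim_{F_{q^m}}(C^{⋆2}) + (m(m−1)/2) · k². -/
open Module Finset Polynomial Pointwise

section TraceAux

variable {q m n : ℕ} {Fq Fqm : Type*} [Field Fq] [Field Fqm]
  [Fintype Fq] [Fintype Fqm] [Algebra Fq Fqm]

lemma pow_q_fix (hq : Fintype.card Fq = q) (x : Fq) (i : ℕ) : x ^ q ^ i = x := by
  induction i with
  | zero => simp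
  | succ i ih => rw [pow_succ, pow_mul, ih, ← hq, FiniteField.pow_card]

lemma alg_pow_fix (hq : Fintype.card Fq = q) (c : Fq) (i : ℕ) :
    (algebraMap Fq Fqm c) ^ q ^ i = algebraMap Fq Fqm c := by
  rw [← map_pow, pow_q_fix hq]

lemma pow_qm_fix (hqm : Fintype.card Fqm = q ^ m) (x : Fqm) : x ^ q ^ m = x := by
  rw [← hqm]; exact FiniteField.pow_card x

lemma pow_q_mul_add (hqm : Fintype.card Fqm = q ^ m) (x : Fqm) (u r : ℕ) :
    x ^ q ^ (m * u + r) = x ^ q ^ r := by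
  induction u with
  | zero => simp
  | succ u ih =>
    have h : m * (u + 1) + r = m + (m * u + r) := by ring
    rw [h, pow_add, mul_comm, pow_mul, pow_qm_fix hqm, ih]

lemma pow_q_mod (hqm : Fintype.card Fqm = q ^ m) (x : Fqm) (s : ℕ) :
    x ^ q ^ s = x ^ q ^ (s % m) := by
  conv_lhs => rw [← Nat.div_add_mod s m, mul_comm]
  rw [mul_comm]
  exact pow_q_mul_add hqm x _ _

variable {p t : ℕ} [Fact p.Prime] [CharP Fqm p]

lemma pow_q_add (hpt : q = p ^ t) (x y : Fqm) (i : ℕ) :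
    (x + y) ^ q ^ i = x ^ q ^ i + y ^ q ^ i := by
  subst hpt
  rw [← pow_mul]
  exact add_pow_char_pow x y p (t * i)

lemma pow_q_sub (hpt : q = p ^ t) (x y : Fqm) (i : ℕ) :
    (x - y) ^ q ^ i = x ^ q ^ i - y ^ q ^ i := by
  subst hpt
  rw [← pow_mul]
  exact sub_pow_char_pow x y (t * i)

end TraceAux

section TraceAux2

variable {q m n : ℕ} {Fq Fqm : Type*} [Field Fq] [Field Fqm]
  [Fintype Fq] [Fintype Fqm] [Algebra Fq Fqm]

/-- The scalar "trace" sum. -/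
def trS (q m : ℕ) {Fqm : Type*} [Field Fqm] (x : Fqm) : Fqm :=
  ∑ i ∈ Finset.range m, x ^ q ^ i

/-- shift-by-one invariance of sums of periodic functions -/
lemma sum_shift_one {A : Type*} [AddCommGroup A] {m : ℕ} (h : ℕ → A)
    (hper : h m = h 0) : ∑ i ∈ Finset.range m, h (i + 1) = ∑ i ∈ Finset.range m, h i := by
  have h1 : ∑ i ∈ Finset.range (m + 1), h i = ∑ i ∈ Finset.range m, h (i + 1) + h 0 :=
    Finset.sum_range_succ' h m
  have h2 : ∑ i ∈ Finset.range (m + 1), h i = ∑ i ∈ Finset.range m, h i + h m :=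
    Finset.sum_range_succ h m
  rw [h1, hper] at h2
  exact add_right_cancel h2

lemma sum_shift (hqm : Fintype.card Fqm = q ^ m) (x : Fqm) (d : ℕ) :
    ∑ i ∈ Finset.range m, x ^ q ^ ((i + d) % m) = ∑ i ∈ Finset.range m, x ^ q ^ (i % m) := by
  induction d with
  | zero => simp
  | succ d ih =>
    have : ∀ i, x ^ q ^ ((i + (d+1)) % m) = (fun s => x ^ q ^ ((s + d) % m)) (i + 1) := by
      intro i; simp only []; rw [show i + (d+1) = (i+1) + d by omega]
    rw [Finset.sum_congr rfl fun i _ => this i]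
    rw [sum_shift_one (m := m) (fun s => x ^ q ^ ((s + d) % m))
      (by rw [show (m + d) % m = (0 + d) % m by simp [Nat.add_mod_left]])]
    exact ih

lemma sum_q_pows (hm : 0 < m) (hqm : Fintype.card Fqm = q ^ m) (x : Fqm) (d : ℕ) :
    ∑ i ∈ Finset.range m, x ^ q ^ (i + d) = trS q m x := by
  have h1 : ∀ i, x ^ q ^ (i + d) = x ^ q ^ ((i + d) % m) := fun i => pow_q_mod hqm x _
  rw [Finset.sum_congr rfl fun i _ => h1 i, sum_shift hqm x d]
  exact Finset.sum_congr rfl fun i hi => by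
    rw [Nat.mod_eq_of_lt (Finset.mem_range.mp hi)]

lemma trS_frob (hm : 0 < m) (hqm : Fintype.card Fqm = q ^ m) (x : Fqm) (d : ℕ) :
    trS q m (x ^ q ^ d) = trS q m x := by
  unfold trS
  have h1 : ∀ i, (x ^ q ^ d) ^ q ^ i = x ^ q ^ (i + d) := by
    intro i; rw [← pow_mul, ← pow_add, Nat.add_comm]
  rw [Finset.sum_congr rfl fun i _ => h1 i]
  exact sum_q_pows hm hqm x d

variable {p t : ℕ} [Fact p.Prime] [CharP Fqm p]

lemma trS_add (hpt : q = p ^ t) (x y : Fqm) :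
    trS q m (x + y) = trS q m x + trS q m y := by
  unfold trS
  rw [← Finset.sum_add_distrib]
  exact Finset.sum_congr rfl fun i _ => pow_q_add hpt x y i

lemma trS_alg_mul (hq : Fintype.card Fq = q) (c : Fq) (x : Fqm) :
    trS q m (algebraMap Fq Fqm c * x) = algebraMap Fq Fqm c * trS q m x := by
  unfold trS
  rw [Finset.mul_sum]
  exact Finset.sum_congr rfl fun i _ => by
    rw [mul_pow, alg_pow_fix hq]

lemma trS_mul_trS (hm : 0 < m) (hqm : Fintype.card Fqm = q ^ m) (x y : Fqm) :
    trS q m x * trS q m y = ∑ d ∈ Finset.range m, trS q m (x * y ^ q ^ d) := by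
  have key : ∀ d, trS q m (x * y ^ q ^ d) = ∑ i ∈ Finset.range m, x ^ q ^ i * y ^ q ^ (d + i) := by
    intro d
    unfold trS
    refine Finset.sum_congr rfl fun i _ => ?_
    rw [mul_pow, ← pow_mul, ← pow_add]
  rw [Finset.sum_congr rfl fun d _ => key d, Finset.sum_comm]
  unfold trS
  rw [Finset.sum_mul]
  refine Finset.sum_congr rfl fun i _ => ?_
  calc x ^ q ^ i * ∑ j ∈ Finset.range m, y ^ q ^ j
      = x ^ q ^ i * ∑ d ∈ Finset.range m, y ^ q ^ ((d + i) % m) := by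
        rw [sum_shift hqm y i]
        exact congrArg _ (Finset.sum_congr rfl fun d hd => by
          rw [Nat.mod_eq_of_lt (Finset.mem_range.mp hd)]).symm
    _ = ∑ d ∈ Finset.range m, x ^ q ^ i * y ^ q ^ ((d + i) % m) := Finset.mul_sum _ _ _
    _ = ∑ d ∈ Finset.range m, x ^ q ^ i * y ^ q ^ (d + i) :=
        Finset.sum_congr rfl fun d _ => by rw [← pow_q_mod hqm]

end TraceAux2

section VectorAux

variable {q m n : ℕ} {Fq Fqm : Type*} [Field Fq] [Field Fqm]
  [Fintype Fq] [Fintype Fqm] [Algebra Fq Fqm]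

/-- coordinatewise `q^d` power -/
def frV (q d : ℕ) {n : ℕ} {Fqm : Type*} [Field Fqm] (x : Fin n → Fqm) : Fin n → Fqm :=
  fun j => x j ^ q ^ d

/-- coordinatewise trace -/
def trV (q m : ℕ) {n : ℕ} {Fqm : Type*} [Field Fqm] (x : Fin n → Fqm) : Fin n → Fqm :=
  fun j => trS q m (x j)

lemma frV_mul (d : ℕ) (x y : Fin n → Fqm) :
    frV q d (x * y) = frV q d x * frV q d y := by
  funext j; simp [frV, mul_pow]

lemma frV_zero_pow (x : Fin n → Fqm) : frV q 0 x = x := by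
  funext j; simp [frV]

lemma trV_frob (hm : 0 < m) (hqm : Fintype.card Fqm = q ^ m) (d : ℕ) (x : Fin n → Fqm) :
    trV q m (frV q d x) = trV q m x := by
  funext j; exact trS_frob hm hqm (x j) d

variable {p t : ℕ} [Fact p.Prime] [CharP Fqm p]

/-- the trace map as an `F_q`-linear map on `F_{q^m}^n` -/
def trVL (q m : ℕ) (n : ℕ) (Fq Fqm : Type*) [Field Fq] [Field Fqm] [Fintype Fq] [Fintype Fqm]
    [Algebra Fq Fqm] (p t : ℕ) [Fact p.Prime] [CharP Fqm p]
    (hq : Fintype.card Fq = q) (hpt : q = p ^ t) :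
    (Fin n → Fqm) →ₗ[Fq] (Fin n → Fqm) where
  toFun := trV q m
  map_add' x y := by funext j; exact trS_add hpt (x j) (y j)
  map_smul' c x := by
    funext j
    simp only [Pi.smul_apply, RingHom.id_apply]
    rw [Algebra.smul_def, Algebra.smul_def]
    exact trS_alg_mul hq c (x j)

@[simp] lemma trVL_apply (hq : Fintype.card Fq = q) (hpt : q = p ^ t) (x : Fin n → Fqm) :
    trVL q m n Fq Fqm p t hq hpt x = trV q m x := rfl

/-- scalar multiplication by elements of `F_{q^m}` as an `F_q`-linear map -/
def smulL (Fq : Type*) {Fqm : Type*} [Field Fq] [Field Fqm] [Algebra Fq Fqm] {n : ℕ}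
    (w : Fin n → Fqm) : Fqm →ₗ[Fq] (Fin n → Fqm) where
  toFun ν := ν • w
  map_add' a b := add_smul a b w
  map_smul' c ν := by simp [smul_assoc]

/-- `ν ↦ ν - ν^{q^e}` as an `F_q`-linear endomorphism of `F_{q^m}` -/
def subFrobL (q : ℕ) (Fq Fqm : Type*) [Field Fq] [Field Fqm] [Fintype Fq] [Fintype Fqm]
    [Algebra Fq Fqm] (p t : ℕ) [Fact p.Prime] [CharP Fqm p]
    (hq : Fintype.card Fq = q) (hpt : q = p ^ t) (e : ℕ) : Fqm →ₗ[Fq] Fqm where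
  toFun ν := ν - ν ^ q ^ e
  map_add' a b := by rw [pow_q_add hpt]; ring
  map_smul' c ν := by
    simp only [RingHom.id_apply, Algebra.smul_def]
    rw [mul_pow, alg_pow_fix hq, mul_sub]

end VectorAux

section SpanAux

variable {q m n : ℕ} {Fq Fqm : Type*} [Field Fq] [Field Fqm]
  [Fintype Fq] [Fintype Fqm] [Algebra Fq Fqm]

lemma finrank_finset_sup_le {K V : Type*} [Field K] [AddCommGroup V] [Module K V]
    [FiniteDimensional K V] {ι : Type*} (s : Finset ι) (P : ι → Submodule K V) :
    finrank K ↥(s.sup P) ≤ ∑ i ∈ s, finrank K (P i) := by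
  classical
  induction s using Finset.cons_induction with
  | empty => simp
  | cons a s ha ih =>
    rw [Finset.sup_cons, Finset.sum_cons]
    exact le_trans (Submodule.finrank_add_le_finrank_add_finrank _ _)
      (Nat.add_le_add le_rfl ih)

lemma finrank_map_restrict_le (hmF : finrank Fq Fqm = m)
    (T : (Fin n → Fqm) →ₗ[Fq] (Fin n → Fqm)) (D : Submodule Fqm (Fin n → Fqm)) :
    finrank Fq (Submodule.map T (D.restrictScalars Fq)) ≤ m * finrank Fqm D := by
  refine le_trans (Submodule.finrank_map_le T (D.restrictScalars Fq)) ?_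
  have h1 : finrank Fq (D.restrictScalars Fq) = finrank Fq D :=
    ((Submodule.restrictScalarsEquiv Fq Fqm _ D).restrictScalars Fq).finrank_eq
  rw [h1, ← hmF]
  exact le_of_eq (Module.finrank_mul_finrank Fq Fqm D).symm

lemma finrank_span_range_le {K V : Type*} [Field K] [AddCommGroup V] [Module K V]
    {ι : Type*} [Fintype ι] (f : ι → V) :
    finrank K (Submodule.span K (Set.range f)) ≤ Fintype.card ι := by
  classical
  rw [← Set.image_univ, ← Finset.coe_univ, ← Finset.coe_image]
  exact le_trans (finrank_span_finset_le_card _) (le_trans Finset.card_image_le (by simp))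

end SpanAux

section KerAux

variable {q m n : ℕ} {Fq Fqm : Type*} [Field Fq] [Field Fqm]
  [Fintype Fq] [Fintype Fqm] [Algebra Fq Fqm]
variable {p t : ℕ} [Fact p.Prime] [CharP Fqm p]

lemma sum_pow_q (hpt : q = p ^ t) {ι : Type*} (s : Finset ι) (f : ι → Fqm) (i : ℕ) :
    (∑ x ∈ s, f x) ^ q ^ i = ∑ x ∈ s, f x ^ q ^ i := by
  classical
  have hq0 : q ^ i ≠ 0 := by
    have : 0 < q := by
      rw [hpt]
      exact pow_pos (Fact.out (p := p.Prime)).pos t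
    positivity
  induction s using Finset.cons_induction with
  | empty => simp [zero_pow hq0]
  | cons a s ha ih => rw [Finset.sum_cons, Finset.sum_cons, pow_q_add hpt, ih]

lemma finrank_ker_subFrob_le (hq : Fintype.card Fq = q) (hpt : q = p ^ t)
    (hq2 : 1 < q) (e : ℕ) (he : 1 ≤ e) :
    finrank Fq (LinearMap.ker (subFrobL q Fq Fqm p t hq hpt e)) ≤ e := by
  classical
  set g := subFrobL q Fq Fqm p t hq hpt e
  set P : Polynomial Fqm := Polynomial.X ^ q ^ e - Polynomial.X with hP
  have hqe2 : 2 ≤ q ^ e := le_trans hq2 (Nat.le_self_pow (by omega) q)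
  have hPne : P ≠ 0 := by
    intro h
    have h2 : (Polynomial.X : Polynomial Fqm) ^ q ^ e = Polynomial.X := by
      rwa [hP, sub_eq_zero] at h
    have := congrArg Polynomial.natDegree h2
    rw [Polynomial.natDegree_X_pow, Polynomial.natDegree_X] at this
    omega
  -- every element of the kernel is a root of P
  have hroot : ∀ ν : Fqm, ν ∈ LinearMap.ker g → ν ∈ P.roots.toFinset := by
    intro ν hν
    rw [Multiset.mem_toFinset, Polynomial.mem_roots hPne]
    have : ν - ν ^ q ^ e = 0 := hν
    simp only [Polynomial.IsRoot, hP, Polynomial.eval_sub, Polynomial.eval_pow,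
      Polynomial.eval_X]
    rw [sub_eq_zero] at this ⊢
    exact this.symm
  have hcard : Fintype.card (LinearMap.ker g) ≤ q ^ e := by
    have hinj : Function.Injective
        (fun ν : LinearMap.ker g => (⟨ν.1, hroot ν.1 ν.2⟩ : {x // x ∈ P.roots.toFinset})) := by
      intro a b hab
      exact Subtype.ext (congrArg Subtype.val hab :)
    refine le_trans (Fintype.card_le_of_injective _ hinj) ?_
    rw [Fintype.card_coe]
    refine le_trans (Multiset.toFinset_card_le _) ?_
    refine le_trans (Polynomial.card_roots' P) ?_
    refine le_trans (Polynomial.natDegree_sub_le _ _) ?_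
    rw [Polynomial.natDegree_X_pow, Polynomial.natDegree_X]
    exact max_le le_rfl (by omega)
  have hcard2 : Fintype.card (LinearMap.ker g) = q ^ finrank Fq (LinearMap.ker g) := by
    rw [← hq]; exact card_eq_pow_finrank
  rw [hcard2] at hcard
  exact (Nat.pow_le_pow_iff_right hq2).mp hcard

end KerAux


set_option maxHeartbeats 2000000

/-- For an `F_{q^m}`-linear code `C ⊆ F_{q^m}^n` of dimension `k`,
`dim_{F_q} Tr(C)^{⋆2} ≤ m · dim_{F_{q^m}}(C^{⋆2}) + (m(m−1)/2) · k²`. -/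
theorem stmt_4 (q m n : ℕ) (hm : 0 < m) (Fq Fqm : Type*) [Field Fq] [Field Fqm]
    [Fintype Fq] [Fintype Fqm] [Algebra Fq Fqm]
    (hq : Fintype.card Fq = q) (hqm : Fintype.card Fqm = q ^ m)
    (C : Submodule Fqm (Fin n → Fqm)) (k : ℕ) (hk : finrank Fqm C = k) :
    finrank Fq (schurProd Fq (traceCode q m Fq C) (traceCode q m Fq C)) ≤
      m * finrank Fqm (schurProd Fqm C C) + m * (m - 1) / 2 * k ^ 2 := by
  classical
  -- characteristic setup
  haveI : CharP Fq (ringChar Fq) := ringChar.charP Fq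
  obtain ⟨tp, hprime, hcardq⟩ := FiniteField.card Fq (ringChar Fq)
  haveI : Fact (ringChar Fq).Prime := ⟨hprime⟩
  haveI : CharP Fqm (ringChar Fq) :=
    charP_of_injective_algebraMap (algebraMap Fq Fqm).injective (ringChar Fq)
  have hpt : q = (ringChar Fq) ^ (tp : ℕ) := by rw [← hq, hcardq]
  have hq2 : 1 < q := by rw [← hq]; exact Fintype.one_lt_card
  have hmF : finrank Fq Fqm = m := by
    have hc : Fintype.card Fqm = Fintype.card Fq ^ finrank Fq Fqm := card_eq_pow_finrank
    rw [hq, hqm] at hc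
    exact (Nat.pow_right_injective (by omega) hc.symm)
  set T := trVL q m n Fq Fqm (ringChar Fq) tp hq hpt with hT
  set G : ℕ → Set (Fin n → Fqm) :=
    fun d => {x | ∃ a ∈ C, ∃ b ∈ C, x = trV q m (a * frV q d b)} with hG
  -- the vector trace-product identity
  have htrmul : ∀ a b : Fin n → Fqm,
      trV q m a * trV q m b = ∑ d ∈ Finset.range m, trV q m (a * frV q d b) := by
    intro a b
    funext j
    rw [Pi.mul_apply, Finset.sum_apply]
    exact trS_mul_trS hm hqm (a j) (b j)
  -- Step 1 : the Schur square of the trace code is spanned by the G d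
  have hstep1 : schurProd Fq (traceCode q m Fq C) (traceCode q m Fq C) ≤
      (Finset.range m).sup (fun d => Submodule.span Fq (G d)) := by
    have hset : {x : Fin n → Fqm | ∃ cc ∈ traceCode q m Fq C, ∃ dd ∈ traceCode q m Fq C,
        x = cc * dd}
        = (traceCode q m Fq C : Set (Fin n → Fqm)) * (traceCode q m Fq C : Set (Fin n → Fqm)) := by
      ext x
      simp only [Set.mem_mul, Set.mem_setOf_eq, SetLike.mem_coe]
      exact ⟨fun ⟨u, hu, w, hw, h⟩ => ⟨u, hu, w, hw, h.symm⟩,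
             fun ⟨u, hu, w, hw, h⟩ => ⟨u, hu, w, hw, h.symm⟩⟩
    have heq : schurProd Fq (traceCode q m Fq C) (traceCode q m Fq C)
        = Submodule.span Fq
            ({x : Fin n → Fqm | ∃ cc ∈ C, x = fun j => ∑ i ∈ Finset.range m, cc j ^ q ^ i} *
             {x : Fin n → Fqm | ∃ cc ∈ C, x = fun j => ∑ i ∈ Finset.range m, cc j ^ q ^ i}) := by
      show Submodule.span Fq _ = _
      rw [hset, ← Submodule.span_mul_span, Submodule.span_eq]
      show traceCode q m Fq C * traceCode q m Fq C = _
      simp only [traceCode]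
      rw [Submodule.span_mul_span]
    rw [heq]
    refine Submodule.span_le.mpr ?_
    rintro x hx
    rw [Set.mem_mul] at hx
    obtain ⟨u, hu, w, hw, hx⟩ := hx
    obtain ⟨a, ha, rfl⟩ := hu
    obtain ⟨b, hb, rfl⟩ := hw
    have hu' : (fun j => ∑ i ∈ Finset.range m, a j ^ q ^ i) = trV q m a := rfl
    have hw' : (fun j => ∑ i ∈ Finset.range m, b j ^ q ^ i) = trV q m b := rfl
    rw [hu', hw'] at hx
    rw [← hx, SetLike.mem_coe, htrmul a b]
    refine Submodule.sum_mem _ fun d hd => ?_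
    refine (Finset.le_sup (f := fun d => Submodule.span Fq (G d)) hd) ?_
    exact Submodule.subset_span ⟨a, ha, b, hb, rfl⟩
  -- symmetry G d ⊆ G (m - d)
  have hswap : ∀ (d : ℕ), d ≤ m → ∀ a b : Fin n → Fqm,
      trV q m (a * frV q d b) = trV q m (b * frV q (m - d) a) := by
    intro d hd a b
    funext j
    have h1 : (b j * (a j) ^ q ^ (m - d)) ^ q ^ d = a j * (b j) ^ q ^ d := by
      rw [mul_pow, ← pow_mul, ← pow_add, Nat.sub_add_cancel hd, pow_qm_fix hqm (a j)]
      ring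
    have h2 := trS_frob hm hqm (b j * (a j) ^ q ^ (m - d)) d
    rw [h1] at h2
    exact h2
  have hGsub : ∀ d, 1 ≤ d → d < m → G d ⊆ G (m - d) := by
    rintro d h1 h2 x ⟨a, ha, b, hb, rfl⟩
    exact ⟨b, hb, a, ha, hswap d h2.le a b⟩
  -- Step 2 : folding
  have hstep2 : (Finset.range m).sup (fun d => Submodule.span Fq (G d)) ≤
      Submodule.span Fq (G 0) ⊔
        (Finset.Icc 1 (m / 2)).sup (fun d => Submodule.span Fq (G d)) := by
    refine Finset.sup_le fun d hd => ?_
    rw [Finset.mem_range] at hd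
    rcases Nat.eq_zero_or_pos d with rfl | hd1
    · exact le_sup_left
    rcases le_or_gt d (m / 2) with hle | hgt
    · exact le_trans (Finset.le_sup (f := fun d => Submodule.span Fq (G d))
        (Finset.mem_Icc.mpr ⟨hd1, hle⟩)) le_sup_right
    · refine le_trans (Submodule.span_mono (hGsub d hd1 hd)) ?_
      exact le_trans (Finset.le_sup (f := fun d => Submodule.span Fq (G d))
        (Finset.mem_Icc.mpr ⟨by omega, by omega⟩)) le_sup_right
  -- basis of C
  let v : Basis (Fin k) Fqm C := Module.finBasisOfFinrankEq Fqm C hk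
  let c : Fin k → (Fin n → Fqm) := fun i => (v i : Fin n → Fqm)
  have hci : ∀ i, c i ∈ C := fun i => (v i).2
  -- expansion of generators in terms of the basis
  have hrepr : ∀ (x : Fin n → Fqm) (hx : x ∈ C), x = ∑ i : Fin k, v.repr ⟨x, hx⟩ i • c i := by
    intro x hx
    have h := congrArg C.subtype (v.sum_repr ⟨x, hx⟩)
    rw [map_sum] at h
    simp only [map_smul] at h
    exact h.symm
  have hexp : ∀ (d : ℕ), ∀ a ∈ C, ∀ b ∈ C, ∃ ν : Fin k × Fin k → Fqm,
      a * frV q d b = ∑ il : Fin k × Fin k, ν il • (c il.1 * frV q d (c il.2)) := by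
    intro d a ha b hb
    refine ⟨fun il => v.repr ⟨a, ha⟩ il.1 * (v.repr ⟨b, hb⟩ il.2) ^ q ^ d, ?_⟩
    have hfr : frV q d b = ∑ l : Fin k, ((v.repr ⟨b, hb⟩ l) ^ q ^ d) • frV q d (c l) := by
      funext j
      rw [Finset.sum_apply]
      show (b j) ^ q ^ d = _
      conv_lhs => rw [hrepr b hb]
      rw [Finset.sum_apply, sum_pow_q hpt]
      refine Finset.sum_congr rfl fun l _ => ?_
      simp only [Pi.smul_apply, smul_eq_mul, mul_pow, frV]
    calc a * frV q d b
        = (∑ i : Fin k, v.repr ⟨a, ha⟩ i • c i) *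
          (∑ l : Fin k, ((v.repr ⟨b, hb⟩ l) ^ q ^ d) • frV q d (c l)) := by
          rw [← hrepr a ha, ← hfr]
      _ = ∑ i : Fin k, ∑ l : Fin k,
            (v.repr ⟨a, ha⟩ i * (v.repr ⟨b, hb⟩ l) ^ q ^ d) • (c i * frV q d (c l)) := by
          rw [Finset.sum_mul_sum]
          exact Finset.sum_congr rfl fun i _ => Finset.sum_congr rfl fun l _ =>
            smul_mul_smul_comm _ _ _ _
      _ = ∑ il : Fin k × Fin k,
            (v.repr ⟨a, ha⟩ il.1 * (v.repr ⟨b, hb⟩ il.2) ^ q ^ d) •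
              (c il.1 * frV q d (c il.2)) := (Fintype.sum_prod_type
            (fun il : Fin k × Fin k => (v.repr ⟨a, ha⟩ il.1 * (v.repr ⟨b, hb⟩ il.2) ^ q ^ d) •
              (c il.1 * frV q d (c il.2)))).symm
  -- bound for G 0
  have hG0 : finrank Fq (Submodule.span Fq (G 0)) ≤ m * finrank Fqm (schurProd Fqm C C) := by
    have hle : Submodule.span Fq (G 0) ≤
        Submodule.map T ((schurProd Fqm C C).restrictScalars Fq) := by
      refine Submodule.span_le.mpr ?_
      rintro x ⟨a, ha, b, hb, rfl⟩
      refine ⟨a * b, ?_, ?_⟩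
      · exact Submodule.subset_span ⟨a, ha, b, hb, rfl⟩
      · show trV q m (a * b) = trV q m (a * frV q 0 b)
        rw [frV_zero_pow b]
    exact le_trans (Submodule.finrank_mono hle) (finrank_map_restrict_le hmF T _)
  -- generic bound for G d
  have hGd : ∀ d, finrank Fq (Submodule.span Fq (G d)) ≤ m * k ^ 2 := by
    intro d
    have hle : Submodule.span Fq (G d) ≤ Submodule.map T
        ((Submodule.span Fqm (Set.range fun il : Fin k × Fin k =>
          c il.1 * frV q d (c il.2))).restrictScalars Fq) := by
      refine Submodule.span_le.mpr ?_
      rintro x ⟨a, ha, b, hb, rfl⟩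
      obtain ⟨ν, hν⟩ := hexp d a ha b hb
      refine Submodule.mem_map.mpr ⟨a * frV q d b, ?_, rfl⟩
      refine (Submodule.restrictScalars_mem _ _ _).mpr ?_
      rw [hν]
      exact Submodule.sum_mem _ fun il _ =>
        Submodule.smul_mem _ _ (Submodule.subset_span ⟨il, rfl⟩)
    refine le_trans (Submodule.finrank_mono hle) ?_
    refine le_trans (finrank_map_restrict_le hmF T _) ?_
    refine Nat.mul_le_mul_left m ?_
    refine le_trans (finrank_span_range_le _) ?_
    simp [pow_two]
  -- improved bound in the middle case
  have hGmid : ∀ e, m = 2 * e → finrank Fq (Submodule.span Fq (G e)) ≤ e * k ^ 2 := by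
    intro e he
    have he1 : 1 ≤ e := by omega
    set f : Fin k × Fin k → (Fqm →ₗ[Fq] (Fin n → Fqm)) :=
      fun il => T ∘ₗ smulL Fq (c il.1 * frV q e (c il.2)) with hf
    have hkey : ∀ i l (ν : Fqm), f (i, l) ν = f (l, i) (ν ^ q ^ e) := by
      intro i l ν
      show trV q m (ν • (c i * frV q e (c l))) = trV q m ((ν ^ q ^ e) • (c l * frV q e (c i)))
      have harg : ∀ j, ((ν ^ q ^ e) • (c l * frV q e (c i))) j
          = ((ν • (c i * frV q e (c l))) j) ^ q ^ e := by
        intro j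
        simp only [Pi.smul_apply, Pi.mul_apply, smul_eq_mul, frV]
        rw [mul_pow, mul_pow, ← pow_mul (c l j), ← pow_add, show e + e = m by omega,
          pow_qm_fix hqm]
        ring
      funext j
      have h2 := trS_frob hm hqm ((ν • (c i * frV q e (c l))) j) e
      rw [← harg j] at h2
      exact h2.symm
    have hrange : ∀ i l, LinearMap.range (f (i, l)) = LinearMap.range (f (l, i)) := by
      intro i l
      apply le_antisymm
      · rintro x ⟨ν, rfl⟩
        exact ⟨ν ^ q ^ e, (hkey i l ν).symm⟩
      · rintro x ⟨ν, rfl⟩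
        exact ⟨ν ^ q ^ e, (hkey l i ν).symm⟩
    have hsup1 : Submodule.span Fq (G e) ≤
        Finset.univ.sup (fun il : Fin k × Fin k => LinearMap.range (f il)) := by
      refine Submodule.span_le.mpr ?_
      rintro x ⟨a, ha, b, hb, rfl⟩
      obtain ⟨ν, hν⟩ := hexp e a ha b hb
      have hx : trV q m (a * frV q e b) = ∑ il : Fin k × Fin k, f il (ν il) := by
        show T (a * frV q e b) = _
        rw [hν, map_sum]
        rfl
      rw [SetLike.mem_coe, hx]
      exact Submodule.sum_mem _ fun il _ =>
        (Finset.le_sup (f := fun il => LinearMap.range (f il)) (Finset.mem_univ il))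
          (LinearMap.mem_range_self _ _)
    set sF : Finset (Fin k × Fin k) := Finset.univ.filter (fun il => il.1 ≤ il.2) with hsF
    have hsup2 : Finset.univ.sup (fun il : Fin k × Fin k => LinearMap.range (f il)) ≤
        sF.sup (fun il => LinearMap.range (f il)) := by
      refine Finset.sup_le fun il _ => ?_
      rcases le_or_gt il.1 il.2 with h | h
      · exact Finset.le_sup (f := fun il => LinearMap.range (f il))
          (by rw [hsF]; simp only [Finset.mem_filter]; exact ⟨Finset.mem_univ il, h⟩)
      · rw [show il = (il.1, il.2) from rfl, hrange il.1 il.2]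
        exact Finset.le_sup (f := fun il => LinearMap.range (f il)) (by simp [hsF, h.le])
    have hb1 : ∀ il : Fin k × Fin k, finrank Fq (LinearMap.range (f il)) ≤ m := by
      intro il
      exact le_trans (LinearMap.finrank_range_le _) (le_of_eq hmF)
    have hb2 : ∀ i : Fin k, finrank Fq (LinearMap.range (f (i, i))) ≤ e := by
      intro i
      set g := subFrobL q Fq Fqm (ringChar Fq) tp hq hpt e with hg
      have hsub : LinearMap.range g ≤ LinearMap.ker (f (i, i)) := by
        rintro x ⟨ν, rfl⟩
        have hgv : g ν = ν - ν ^ q ^ e := rfl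
        rw [LinearMap.mem_ker, hgv, map_sub, hkey i i ν]
        exact sub_self _
      have h1 := LinearMap.finrank_range_add_finrank_ker (f (i, i))
      have h2 := LinearMap.finrank_range_add_finrank_ker g
      rw [hmF] at h1 h2
      have h3 : finrank Fq (LinearMap.range g) ≤ finrank Fq (LinearMap.ker (f (i, i))) :=
        Submodule.finrank_mono hsub
      have h4 := finrank_ker_subFrob_le (Fqm := Fqm) hq hpt hq2 e he1
      rw [← hg] at h4
      omega
    refine le_trans (Submodule.finrank_mono (le_trans hsup1 hsup2)) ?_
    refine le_trans (finrank_finset_sup_le sF _) ?_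
    have hptw : ∀ il ∈ sF, finrank Fq (LinearMap.range (f il)) ≤
        (if il.1 = il.2 then e else m) := by
      intro il _
      by_cases h : il.1 = il.2
      · rw [if_pos h]
        have hileq : il = (il.1, il.1) := Prod.ext rfl h.symm
        rw [hileq]
        exact hb2 il.1
      · rw [if_neg h]
        exact hb1 il
    refine le_trans (Finset.sum_le_sum hptw) ?_
    have hsplit : ∀ il : Fin k × Fin k,
        (if il.1 ≤ il.2 then (if il.1 = il.2 then e else m) else 0)
          = (if il.1 = il.2 then e else 0) + (if il.1 < il.2 then m else 0) := by
      intro il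
      rcases lt_trichotomy il.1 il.2 with h | h | h
      · rw [if_pos h.le, if_neg h.ne, if_neg h.ne, if_pos h, Nat.zero_add]
      · simp [h, lt_irrefl]
      · rw [if_neg (not_le.mpr h), if_neg (ne_of_gt h), if_neg (asymm h)]
    rw [hsF, Finset.sum_filter, Finset.sum_congr rfl fun il _ => hsplit il,
      Finset.sum_add_distrib]
    have hA : ∑ il : Fin k × Fin k, (if il.1 = il.2 then e else 0) = k * e := by
      rw [Fintype.sum_prod_type (f := fun il : Fin k × Fin k => if il.1 = il.2 then e else 0)]
      have hinner : ∀ i : Fin k, ∑ l : Fin k, (if i = l then e else 0) = e := by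
        intro i
        rw [Finset.sum_ite_eq]
        simp
      rw [Finset.sum_congr rfl fun i _ => hinner i, Finset.sum_const, Finset.card_univ,
        Fintype.card_fin, smul_eq_mul]
    have hB : ∑ il : Fin k × Fin k, (if il.1 < il.2 then m else 0)
        = (∑ i ∈ Finset.range k, i) * m := by
      rw [Fintype.sum_prod_type (f := fun il : Fin k × Fin k => if il.1 < il.2 then m else 0)]
      have hinner : ∀ i : Fin k, ∑ l : Fin k, (if i < l then m else 0) = (k - 1 - i.val) * m := by
        intro i
        rw [← Finset.sum_filter]
        rw [show Finset.univ.filter (fun l : Fin k => i < l) = Finset.Ioi i from by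
          ext l; simp [Finset.mem_Ioi]]
        rw [Finset.sum_const, Fin.card_Ioi, smul_eq_mul]
      rw [Finset.sum_congr rfl fun i _ => hinner i]
      rw [Fin.sum_univ_eq_sum_range (fun j => (k - 1 - j) * m) k]
      rw [Finset.sum_range_reflect (fun j => j * m) k]
      rw [Finset.sum_mul]
    rw [hA, hB]
    have hgauss := Finset.sum_range_id_mul_two k
    have hkk : k + k * (k - 1) = k ^ 2 := by
      cases k with
      | zero => simp
      | succ k' => simp only [Nat.succ_sub_one]; ring
    calc k * e + (∑ i ∈ Finset.range k, i) * m
        = k * e + ((∑ i ∈ Finset.range k, i) * 2) * e := by rw [he]; ring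
      _ = (k + k * (k - 1)) * e := by rw [hgauss]; ring
      _ = e * k ^ 2 := by rw [hkk]; ring
      _ ≤ e * k ^ 2 := le_rfl
  -- assembling everything
  refine le_trans (Submodule.finrank_mono (le_trans hstep1 hstep2)) ?_
  refine le_trans (Submodule.finrank_add_le_finrank_add_finrank _ _) ?_
  refine Nat.add_le_add hG0 ?_
  refine le_trans (finrank_finset_sup_le _ _) ?_
  rcases Nat.even_or_odd m with ⟨e, he⟩ | ⟨u, hu⟩
  · -- even case
    have he' : m = 2 * e := by omega
    have he1 : 1 ≤ e := by omega
    have hdiv : m / 2 = e := by omega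
    rw [hdiv]
    have he2 : e = (e - 1) + 1 := by omega
    rw [he2, Finset.sum_Icc_succ_top (by omega)]
    have hA : ∑ d ∈ Finset.Icc 1 (e - 1), finrank Fq (Submodule.span Fq (G d))
        ≤ (e - 1) * (m * k ^ 2) := by
      refine le_trans (Finset.sum_le_sum fun d _ => hGd d) ?_
      rw [Finset.sum_const, Nat.card_Icc, smul_eq_mul]
      have h3 : e - 1 + 1 - 1 = e - 1 := by omega
      rw [h3]
    have hB : finrank Fq (Submodule.span Fq (G ((e - 1) + 1))) ≤ e * k ^ 2 := by
      rw [← he2]; exact hGmid e he'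
    refine le_trans (Nat.add_le_add hA hB) ?_
    obtain ⟨e', rfl⟩ : ∃ e', e = e' + 1 := ⟨e - 1, by omega⟩
    rw [he']
    simp only [Nat.add_sub_cancel]
    have hdd : 2 * (e' + 1) * (2 * (e' + 1) - 1) / 2 = (e' + 1) * (2 * e' + 1) := by
      have h1 : 2 * (e' + 1) - 1 = 2 * e' + 1 := by omega
      rw [h1]
      have h2 : 2 * (e' + 1) * (2 * e' + 1) = 2 * ((e' + 1) * (2 * e' + 1)) := by ring
      rw [h2, Nat.mul_div_cancel_left _ (by norm_num)]
    rw [hdd]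
    exact le_of_eq (by ring)
  · -- odd case
    have hdiv : m / 2 = u := by omega
    rw [hdiv]
    have hA : ∑ d ∈ Finset.Icc 1 u, finrank Fq (Submodule.span Fq (G d))
        ≤ u * (m * k ^ 2) := by
      refine le_trans (Finset.sum_le_sum fun d _ => hGd d) ?_
      rw [Finset.sum_const, Nat.card_Icc, smul_eq_mul]
      have h3 : u + 1 - 1 = u := by omega
      rw [h3]
    refine le_trans hA ?_
    have hdd : m * (m - 1) / 2 = u * m := by
      rw [hu]
      have h1 : 2 * u + 1 - 1 = 2 * u := by omega
      rw [h1]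
      have h2 : (2 * u + 1) * (2 * u) = 2 * (u * (2 * u + 1)) := by ring
      rw [h2, Nat.mul_div_cancel_left _ (by norm_num), Nat.mul_comm]
    rw [hdd]
    exact le_of_eq (by ring)
end

section
/- Let C ⊆ F_{q^m}^n be an F_{q^m}-linear code of dimension k, and let s ≥ 0 be an integer such that dim_{F_{q^m}}(C^{⋆2}) ≤ k + s. Then 2·dim_{F_q} Tr(C)^{⋆2} ≤ mk(mk+1) − m·(k(k−1) − 2s), as an inequality of integers. -/
open Module

section ScalarAux

variable {F : Type*} [Field F]

/-- scalar trace-like sum -/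
private def trp (q m : ℕ) (x : F) : F := ∑ i ∈ Finset.range m, x ^ q ^ i

private lemma padd {q : ℕ} (hadd : ∀ x y : F, (x + y) ^ q = x ^ q + y ^ q) :
    ∀ (i : ℕ) (x y : F), (x + y) ^ q ^ i = x ^ q ^ i + y ^ q ^ i := by
  intro i
  induction i with
  | zero => intro x y; simp
  | succ i ih =>
      intro x y
      rw [pow_succ, pow_mul, pow_mul, pow_mul, ih, hadd]

private lemma pfix {q : ℕ} {a : F} (ha : a ^ q = a) : ∀ i : ℕ, a ^ q ^ i = a := by
  intro i
  induction i with
  | zero => simp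
  | succ i ih => rw [pow_succ, pow_mul, ih, ha]

private lemma trp_add {q m : ℕ} (hadd : ∀ x y : F, (x + y) ^ q = x ^ q + y ^ q) (x y : F) :
    trp q m (x + y) = trp q m x + trp q m y := by
  simp only [trp, padd hadd, Finset.sum_add_distrib]

private lemma trp_zero {q m : ℕ} (hq : q ≠ 0) : trp q m (0 : F) = 0 := by
  simp [trp, zero_pow (pow_ne_zero _ hq)]

private lemma trp_mul_fix {q m : ℕ} {a : F} (ha : a ^ q = a) (x : F) :
    trp q m (a * x) = a * trp q m x := by
  simp [trp, mul_pow, pfix ha, Finset.mul_sum]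

private lemma trp_frob_one {q m : ℕ} (hXq : ∀ x : F, x ^ q ^ m = x) (x : F) :
    trp q m (x ^ q) = trp q m x := by
  have h1 : ∀ i : ℕ, (x ^ q) ^ q ^ i = x ^ q ^ (i + 1) := by
    intro i
    rw [pow_succ', pow_mul]
  have e1 := Finset.sum_range_succ' (fun i => x ^ q ^ i) m
  have e2 := Finset.sum_range_succ (fun i => x ^ q ^ i) m
  have h3 : x ^ q ^ m = x ^ q ^ 0 := by rw [hXq]; simp
  rw [h3] at e2
  simp only [trp, h1]
  exact add_right_cancel (e1.symm.trans e2)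

private lemma trp_frob {q m : ℕ} (hXq : ∀ x : F, x ^ q ^ m = x) (j : ℕ) (x : F) :
    trp q m (x ^ q ^ j) = trp q m x := by
  induction j with
  | zero => simp
  | succ j ih => rw [pow_succ, pow_mul, trp_frob_one hXq, ih]

private lemma trp_mul {q m : ℕ} (hXq : ∀ x : F, x ^ q ^ m = x) (x y : F) :
    trp q m x * trp q m y = ∑ δ ∈ Finset.range m, trp q m (x * y ^ q ^ δ) := by
  have this : ∀ δ i : ℕ, (x * y ^ q ^ δ) ^ q ^ i = x ^ q ^ i * (y ^ q ^ i) ^ q ^ δ := by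
    intro δ i
    rw [mul_pow, pow_right_comm]
  calc trp q m x * trp q m y
      = ∑ i ∈ Finset.range m, x ^ q ^ i * trp q m y := by rw [trp, Finset.sum_mul]
    _ = ∑ i ∈ Finset.range m, x ^ q ^ i * trp q m (y ^ q ^ i) := by
        refine Finset.sum_congr rfl fun i _ => ?_
        rw [trp_frob hXq i y]
    _ = ∑ i ∈ Finset.range m, ∑ δ ∈ Finset.range m, x ^ q ^ i * (y ^ q ^ i) ^ q ^ δ := by
        refine Finset.sum_congr rfl fun i _ => ?_
        rw [trp, Finset.mul_sum]
    _ = ∑ δ ∈ Finset.range m, ∑ i ∈ Finset.range m, x ^ q ^ i * (y ^ q ^ i) ^ q ^ δ :=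
        Finset.sum_comm
    _ = ∑ δ ∈ Finset.range m, trp q m (x * y ^ q ^ δ) := by
        refine Finset.sum_congr rfl fun δ _ => ?_
        rw [trp]
        exact (Finset.sum_congr rfl fun i _ => (this δ i).symm)

private lemma trp_swap {q m : ℕ} (hXq : ∀ x : F, x ^ q ^ m = x) {δ : ℕ} (hδ : δ ≤ m) (x y : F) :
    trp q m (x * y ^ q ^ δ) = trp q m (y * x ^ q ^ (m - δ)) := by
  have h1 : (x * y ^ q ^ δ) ^ q ^ (m - δ) = y * x ^ q ^ (m - δ) := by
    rw [mul_pow, ← pow_mul, ← pow_add, Nat.add_sub_cancel' hδ, hXq, mul_comm]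
  rw [← trp_frob hXq (m - δ) (x * y ^ q ^ δ), h1]

private lemma trp_even {q : ℕ} {m h : ℕ} (hadd : ∀ x y : F, (x + y) ^ q = x ^ q + y ^ q)
    (hm : m = h + h) (lam x : F) (hx : x ^ q ^ h = x) :
    trp q m (lam * x) = ∑ r ∈ Finset.range h, ((lam + lam ^ q ^ h) * x) ^ q ^ r := by
  subst hm
  have key : ∀ r : ℕ, (lam * x) ^ q ^ (h + r) = (lam ^ q ^ h * x) ^ q ^ r := by
    intro r
    rw [pow_add, pow_mul, mul_pow, hx]
  calc trp q (h + h) (lam * x)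
      = (∑ r ∈ Finset.range h, (lam * x) ^ q ^ r)
        + ∑ r ∈ Finset.range h, (lam * x) ^ q ^ (h + r) := by
        rw [trp, Finset.sum_range_add]
    _ = ∑ r ∈ Finset.range h, ((lam + lam ^ q ^ h) * x) ^ q ^ r := by
        rw [← Finset.sum_add_distrib]
        refine Finset.sum_congr rfl fun r _ => ?_
        rw [key, ← padd hadd, add_mul]

end ScalarAux

section VecAux

variable {F : Type*} [Field F] {n : ℕ}

private def trv (q m : ℕ) (c : Fin n → F) : Fin n → F :=
  fun j => ∑ i ∈ Finset.range m, c j ^ q ^ i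

private def pwv (q δ : ℕ) (c : Fin n → F) : Fin n → F := fun j => c j ^ q ^ δ

end VecAux

section Count

private lemma finrank_biSup_le {K V : Type*} [Field K] [AddCommGroup V] [Module K V]
    [FiniteDimensional K V] {ι : Type*} [DecidableEq ι] (t : Finset ι) (M : ι → Submodule K V) :
    finrank K ↥(⨆ i ∈ t, M i) ≤ ∑ i ∈ t, finrank K ↥(M i) := by
  classical
  induction t using Finset.induction with
  | empty => simp
  | insert a t' h ih =>
      rw [Finset.sum_insert h]
      have h1 : (⨆ i ∈ insert a t', M i) = M a ⊔ ⨆ i ∈ t', M i := by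
        rw [Finset.iSup_insert]
      rw [h1]
      exact le_trans (Submodule.finrank_add_le_finrank_add_finrank _ _)
        (Nat.add_le_add_left ih _)

private lemma two_mul_card_lt_pairs (k : ℕ) :
    2 * Fintype.card {p : Fin k × Fin k // p.1 < p.2} + k = k * k := by
  classical
  set t : Finset (Fin k × Fin k) := Finset.univ.filter (fun p => p.1 < p.2) with ht
  set t' : Finset (Fin k × Fin k) := Finset.univ.filter (fun p => p.2 < p.1) with ht'
  have hlt : Fintype.card {p : Fin k × Fin k // p.1 < p.2} = t.card :=
    Fintype.card_subtype _
  have hswap : t.card = t'.card := by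
    refine Finset.card_bij' (fun p _ => Prod.swap p) (fun p _ => Prod.swap p) ?_ ?_ ?_ ?_
    · intro p hp
      simp only [ht, Finset.mem_filter, Finset.mem_univ, true_and] at hp
      simp only [ht', Finset.mem_filter, Finset.mem_univ, true_and]
      exact hp
    · intro p hp
      simp only [ht', Finset.mem_filter, Finset.mem_univ, true_and] at hp
      simp only [ht, Finset.mem_filter, Finset.mem_univ, true_and]
      exact hp
    · intro p _; rfl
    · intro p _; rfl
  have hunion : t ∪ t' = Finset.univ.filter (fun p => ¬ p.1 = p.2) := by
    rw [ht, ht', ← Finset.filter_or]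
    refine Finset.filter_congr fun p _ => ?_
    constructor
    · rintro (h | h) h'
      · exact absurd h' (ne_of_lt h)
      · exact absurd h'.symm (ne_of_lt h)
    · intro h
      exact lt_or_gt_of_ne h
  have hdisj : Disjoint t t' := by
    rw [Finset.disjoint_left]
    intro p hp hp'
    rw [ht] at hp; rw [ht'] at hp'
    simp only [Finset.mem_filter, Finset.mem_univ, true_and] at hp hp'
    exact absurd hp' (not_lt_of_gt hp)
  have hcard_union : (t ∪ t').card = t.card + t'.card := Finset.card_union_of_disjoint hdisj
  have hcompl := Finset.card_filter_add_card_filter_not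
    (s := (Finset.univ : Finset (Fin k × Fin k))) (p := fun p => p.1 = p.2)
  have hdiag : (Finset.univ.filter (fun p : Fin k × Fin k => p.1 = p.2)).card = k := by
    rw [← Fintype.card_subtype]
    have hbij : Function.Bijective
        (fun i : Fin k => (⟨(i, i), rfl⟩ : {p : Fin k × Fin k // p.1 = p.2})) := by
      constructor
      · intro a b hab
        simpa using congrArg (fun z : {p : Fin k × Fin k // p.1 = p.2} => z.1.1) hab
      · rintro ⟨⟨a, b⟩, hab⟩
        refine ⟨a, ?_⟩
        simp only at hab
        subst hab
        rfl
    rw [← Fintype.card_of_bijective hbij, Fintype.card_fin]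
  have htot : (Finset.univ : Finset (Fin k × Fin k)).card = k * k := by
    simp [Finset.card_univ]
  rw [hunion] at hcard_union
  omega

end Count

set_option maxHeartbeats 2000000 in
/-- For an `F_{q^m}`-linear code `C ⊆ F_{q^m}^n` of dimension `k` and an integer `s ≥ 0`
with `dim_{F_{q^m}}(C^{⋆2}) ≤ k + s`, one has
`2·dim_{F_q} Tr(C)^{⋆2} ≤ mk(mk+1) − m·(k(k−1) − 2s)` as an inequality of integers. -/
theorem stmt_6 (q m n : ℕ) (hm : 0 < m) (Fq Fqm : Type*) [Field Fq] [Field Fqm]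
    [Fintype Fq] [Fintype Fqm] [Algebra Fq Fqm]
    (hq : Fintype.card Fq = q) (hqm : Fintype.card Fqm = q ^ m)
    (C : Submodule Fqm (Fin n → Fqm)) (k : ℕ) (hk : finrank Fqm C = k)
    (s : ℕ) (hs : finrank Fqm (schurProd Fqm C C) ≤ k + s) :
    2 * (finrank Fq (schurProd Fq (traceCode q m Fq C) (traceCode q m Fq C)) : ℤ) ≤
      (m : ℤ) * k * (m * k + 1) - m * (k * ((k : ℤ) - 1) - 2 * s) := by
  classical
  have hq2 : 2 ≤ q := by rw [← hq]; exact Fintype.one_lt_card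
  have hq0 : q ≠ 0 := by omega
  -- characteristic facts
  obtain ⟨e0, hpprime, hqe⟩ := FiniteField.card Fq (ringChar Fq)
  haveI : Fact (ringChar Fq).Prime := ⟨hpprime⟩
  haveI : CharP Fqm (ringChar Fq) :=
    charP_of_injective_algebraMap (algebraMap Fq Fqm).injective _
  have hadd : ∀ x y : Fqm, (x + y) ^ q = x ^ q + y ^ q := by
    intro x y
    have hqpe : q = ringChar Fq ^ (e0 : ℕ) := by rw [← hq, hqe]
    rw [hqpe]
    exact add_pow_char_pow x y (ringChar Fq) (e0 : ℕ)
  have hXq : ∀ x : Fqm, x ^ q ^ m = x := by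
    intro x
    rw [← hqm]
    exact FiniteField.pow_card x
  have halg : ∀ a : Fq, (algebraMap Fq Fqm a) ^ q = algebraMap Fq Fqm a := by
    intro a
    rw [← map_pow, ← hq, FiniteField.pow_card]
  haveI : FiniteDimensional Fq (Fin n → Fqm) := Module.Finite.of_finite
  haveI : FiniteDimensional Fq Fqm := Module.Finite.of_finite
  have hm' : finrank Fq Fqm = m := by
    have hcard := card_eq_pow_finrank (K := Fq) (V := Fqm)
    rw [hq, hqm] at hcard
    exact (Nat.pow_right_injective hq2 hcard).symm
  -- vector-level lemmas
  have trv_add : ∀ (m' : ℕ) (u v : Fin n → Fqm),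
      trv q m' (u + v) = trv q m' u + trv q m' v := by
    intro m' u v
    funext j
    exact trp_add (m := m') hadd (u j) (v j)
  have trv_zero : ∀ (m' : ℕ), trv q m' (0 : Fin n → Fqm) = 0 := by
    intro m'
    funext j
    exact trp_zero (m := m') hq0
  have trv_smul : ∀ (m' : ℕ) (c : Fq) (v : Fin n → Fqm),
      trv q m' (c • v) = c • trv q m' v := by
    intro m' c v
    funext j
    show trp q m' (c • v j) = c • trp q m' (v j)
    rw [Algebra.smul_def, Algebra.smul_def]
    exact trp_mul_fix (halg c) (v j)
  have pwv_zero : ∀ δ : ℕ, pwv q δ (0 : Fin n → Fqm) = 0 := by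
    intro δ
    funext j
    exact zero_pow (pow_ne_zero _ hq0)
  have pwv_add : ∀ (δ : ℕ) (u v : Fin n → Fqm), pwv q δ (u + v) = pwv q δ u + pwv q δ v := by
    intro δ u v
    funext j
    exact padd hadd δ (u j) (v j)
  have pwv_smul : ∀ (δ : ℕ) (μ : Fqm) (v : Fin n → Fqm),
      pwv q δ (μ • v) = (μ ^ q ^ δ) • pwv q δ v := by
    intro δ μ v
    funext j
    exact mul_pow μ (v j) (q ^ δ)
  have trv_mul_expand : ∀ u v : Fin n → Fqm,
      trv q m u * trv q m v = ∑ δ ∈ Finset.range m, trv q m (u * pwv q δ v) := by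
    intro u v
    funext j
    have := trp_mul (m := m) hXq (u j) (v j)
    rw [Pi.mul_apply, Finset.sum_apply]
    exact this
  -- bases
  let αb : Basis (Fin m) Fq Fqm := Module.finBasisOfFinrankEq Fq Fqm hm'
  let e : Fin k → (Fin n → Fqm) := fun i => (Module.finBasisOfFinrankEq Fqm C hk i : Fin n → Fqm)
  have hCe : Submodule.span Fqm (Set.range e) = C := by
    have h1 : Set.range e = C.subtype '' Set.range (Module.finBasisOfFinrankEq Fqm C hk) := by
      rw [← Set.range_comp]; rfl
    rw [h1, ← Submodule.map_span, Basis.span_eq, Submodule.map_top, Submodule.range_subtype]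
  let Dm := schurProd Fqm C C
  let f : Fin (finrank Fqm Dm) → (Fin n → Fqm) := fun t => (Module.finBasis Fqm Dm t : Fin n → Fqm)
  have hDf : Submodule.span Fqm (Set.range f) = Dm := by
    have h1 : Set.range f = Dm.subtype '' Set.range (Module.finBasis Fqm Dm) := by
      rw [← Set.range_comp]; rfl
    rw [h1, ← Submodule.map_span, Basis.span_eq, Submodule.map_top, Submodule.range_subtype]
  -- the α-span helper
  have helper : ∀ (M : Submodule Fq (Fin n → Fqm)) (w : Fin n → Fqm),
      (∀ a : Fin m, trv q m (αb a • w) ∈ M) → ∀ lam : Fqm, trv q m (lam • w) ∈ M := by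
    intro M w hgen lam
    have hlam : lam ∈ Submodule.span Fq (Set.range (αb : Fin m → Fqm)) := by
      rw [Basis.span_eq]; trivial
    induction hlam using Submodule.span_induction with
    | mem x hx => obtain ⟨a, rfl⟩ := hx; exact hgen a
    | zero => rw [zero_smul, trv_zero]; exact M.zero_mem
    | add x y _ _ ihx ihy => rw [add_smul, trv_add]; exact M.add_mem ihx ihy
    | smul c x _ ih =>
        rw [smul_assoc, trv_smul]
        exact M.smul_mem c ih
  -- submodules
  let A0 : Submodule Fq (Fin n → Fqm) :=
    Submodule.span Fq {x | ∃ w ∈ Dm, x = trv q m w}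
  let AD : ℕ → Submodule Fq (Fin n → Fqm) := fun δ =>
    Submodule.span Fq (Set.range fun pr : Fin m × Fin k × Fin k =>
      trv q m (αb pr.1 • (e pr.2.1 * pwv q δ (e pr.2.2))))
  let h2 : ℕ := m / 2
  let wv : Fin k → (Fin n → Fqm) := fun i => e i * pwv q h2 (e i)
  let ψ : Fin k → (Fqm →ₗ[Fq] (Fin n → Fqm)) := fun i =>
    { toFun := fun μ => trv q h2 (μ • wv i)
      map_add' := by
        intro μ ν
        show trv q h2 ((μ + ν) • wv i) = trv q h2 (μ • wv i) + trv q h2 (ν • wv i)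
        rw [add_smul, trv_add]
      map_smul' := by
        intro c μ
        show trv q h2 ((c • μ) • wv i) = c • trv q h2 (μ • wv i)
        rw [smul_assoc, trv_smul] }
  let Kmod : Submodule Fq Fqm :=
    { carrier := {x | x ^ q ^ h2 = x}
      add_mem' := by
        intro a b ha hb
        simp only [Set.mem_setOf_eq] at *
        rw [padd hadd, ha, hb]
      zero_mem' := by
        simp only [Set.mem_setOf_eq]
        exact zero_pow (pow_ne_zero _ hq0)
      smul_mem' := by
        intro c x hx
        simp only [Set.mem_setOf_eq] at *
        rw [Algebra.smul_def, mul_pow, pfix (halg c), hx] }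
  let Boff : Submodule Fq (Fin n → Fqm) :=
    Submodule.span Fq (Set.range fun pr : Fin m × {p : Fin k × Fin k // p.1 < p.2} =>
      trv q m (αb pr.1 • (e pr.2.1.1 * pwv q h2 (e pr.2.1.2))))
  let Bdiag : Submodule Fq (Fin n → Fqm) := ⨆ i : Fin k, Kmod.map (ψ i)
  -- generic double induction principle
  have genind : ∀ (M : Submodule Fq (Fin n → Fqm)) (δ : ℕ),
      (∀ (i j : Fin k) (lam : Fqm), trv q m (lam • (e i * pwv q δ (e j))) ∈ M) →
      ∀ v, v ∈ C → ∀ u, u ∈ C → ∀ lam : Fqm, trv q m (lam • (u * pwv q δ v)) ∈ M := by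
    intro M δ hbase v hv
    rw [← hCe] at hv
    induction hv using Submodule.span_induction with
    | mem x hx =>
        obtain ⟨j, rfl⟩ := hx
        intro u hu
        rw [← hCe] at hu
        induction hu using Submodule.span_induction with
        | mem y hy =>
            obtain ⟨i, rfl⟩ := hy
            intro lam
            exact hbase i j lam
        | zero =>
            intro lam
            rw [zero_mul, smul_zero, trv_zero]
            exact M.zero_mem
        | add u₁ u₂ _ _ ih1 ih2 =>
            intro lam
            rw [add_mul, smul_add, trv_add]
            exact M.add_mem (ih1 lam) (ih2 lam)
        | smul μ u _ ih =>
            intro lam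
            rw [smul_mul_assoc, smul_smul]
            exact ih (lam * μ)
    | zero =>
        intro u hu lam
        rw [pwv_zero, mul_zero, smul_zero, trv_zero]
        exact M.zero_mem
    | add v₁ v₂ _ _ ih1 ih2 =>
        intro u hu lam
        rw [pwv_add, mul_add, smul_add, trv_add]
        exact M.add_mem (ih1 u hu lam) (ih2 u hu lam)
    | smul μ v _ ih =>
        intro u hu lam
        rw [pwv_smul, mul_smul_comm, smul_smul]
        exact ih u hu (lam * μ ^ q ^ δ)
  -- base case for the middle exponent (m even)
  have memHbase : 2 ∣ m → ∀ (i j : Fin k) (lam : Fqm),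
      trv q m (lam • (e i * pwv q h2 (e j))) ∈ Boff ⊔ Bdiag := by
    intro hdvd i j lam
    have hm2 : m = h2 + h2 := by omega
    have hqq : q ^ h2 * q ^ h2 = q ^ m := by
      rw [← pow_add, ← hm2]
    rcases lt_trichotomy i j with hij | hij | hij
    · refine helper _ _ (fun a => ?_) lam
      exact Submodule.mem_sup_left
        (Submodule.subset_span ⟨(a, ⟨(i, j), hij⟩), rfl⟩)
    · subst hij
      have hwfix : ∀ t, (wv i) t ^ q ^ h2 = (wv i) t := by
        intro t
        show (e i t * (e i t) ^ q ^ h2) ^ q ^ h2 = e i t * (e i t) ^ q ^ h2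
        rw [mul_pow, ← pow_mul, hqq, hXq, mul_comm]
      have hdiagid : trv q m (lam • wv i) = ψ i (lam + lam ^ q ^ h2) := by
        funext t
        exact trp_even hadd hm2 lam ((wv i) t) (hwfix t)
      rw [hdiagid]
      refine Submodule.mem_sup_right ?_
      have hKm : lam + lam ^ q ^ h2 ∈ Kmod := by
        show (lam + lam ^ q ^ h2) ^ q ^ h2 = lam + lam ^ q ^ h2
        rw [padd hadd, ← pow_mul, hqq, hXq, add_comm]
      exact (le_iSup (fun i => Kmod.map (ψ i)) i) (Submodule.mem_map_of_mem hKm)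
    · have hswapid : trv q m (lam • (e i * pwv q h2 (e j)))
          = trv q m ((lam ^ q ^ h2) • (e j * pwv q h2 (e i))) := by
        funext t
        have ha : (lam • (e i * pwv q h2 (e j))) t = (lam * e i t) * (e j t) ^ q ^ h2 := by
          show lam * (e i t * (e j t) ^ q ^ h2) = _
          ring
        have hb : ((lam ^ q ^ h2) • (e j * pwv q h2 (e i))) t
            = (e j t) * (lam * e i t) ^ q ^ (m - h2) := by
          show lam ^ q ^ h2 * (e j t * (e i t) ^ q ^ h2) = _
          have hmh : m - h2 = h2 := by omega
          rw [hmh, mul_pow]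
          ring
        show trp q m ((lam • (e i * pwv q h2 (e j))) t)
            = trp q m (((lam ^ q ^ h2) • (e j * pwv q h2 (e i))) t)
        rw [ha, hb]
        exact trp_swap hXq (by omega) (lam * e i t) (e j t)
      rw [hswapid]
      refine helper _ _ (fun a => ?_) _
      exact Submodule.mem_sup_left
        (Submodule.subset_span ⟨(a, ⟨(j, i), hij⟩), rfl⟩)
  -- A0 via generators
  have hwA0 : ∀ w ∈ Dm, ∀ lam : Fqm, trv q m (lam • w) ∈ Submodule.span Fq
      (Set.range fun pr : Fin m × Fin (finrank Fqm Dm) => trv q m (αb pr.1 • f pr.2)) := by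
    intro w hw
    rw [← hDf] at hw
    induction hw using Submodule.span_induction with
    | mem x hx =>
        obtain ⟨t, rfl⟩ := hx
        intro lam
        refine helper _ _ (fun a => ?_) lam
        exact Submodule.subset_span ⟨(a, t), rfl⟩
    | zero =>
        intro lam
        rw [smul_zero, trv_zero]
        exact Submodule.zero_mem _
    | add x y _ _ ihx ihy =>
        intro lam
        rw [smul_add, trv_add]
        exact Submodule.add_mem _ (ihx lam) (ihy lam)
    | smul μ x _ ih =>
        intro lam
        rw [smul_smul]
        exact ih (lam * μ)
  -- rank bounds
  have rA0 : finrank Fq ↥A0 ≤ m * (k + s) := by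
    have hle : A0 ≤ Submodule.span Fq
        (Set.range fun pr : Fin m × Fin (finrank Fqm Dm) => trv q m (αb pr.1 • f pr.2)) := by
      refine Submodule.span_le.mpr ?_
      rintro x ⟨w, hw, rfl⟩
      have hx := hwA0 w hw 1
      rwa [one_smul] at hx
    refine le_trans (Submodule.finrank_mono hle) ?_
    refine le_trans (finrank_range_le_card _) ?_
    simp only [Fintype.card_prod, Fintype.card_fin]
    exact Nat.mul_le_mul_left m hs
  have rAD : ∀ δ : ℕ, finrank Fq ↥(AD δ) ≤ m * (k * k) := by
    intro δ
    refine le_trans (finrank_range_le_card _) ?_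
    simp [Fintype.card_prod, Fintype.card_fin, mul_assoc]
  have rBoff : 2 * finrank Fq ↥Boff + m * k ≤ m * (k * k) := by
    have h1 : finrank Fq ↥Boff ≤ m * Fintype.card {p : Fin k × Fin k // p.1 < p.2} := by
      refine le_trans (finrank_range_le_card _) ?_
      simp [Fintype.card_prod, Fintype.card_fin]
    have h2' := two_mul_card_lt_pairs k
    have h3 : 2 * (m * Fintype.card {p : Fin k × Fin k // p.1 < p.2}) + m * k
        = m * (k * k) := by
      rw [← h2']
      ring
    linarith
  have rBdiag : 2 ∣ m → finrank Fq ↥Bdiag ≤ k * h2 := by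
    intro hdvd
    have hh1 : 1 ≤ h2 := by omega
    have hKrank : finrank Fq ↥Kmod ≤ h2 := by
      haveI : Fintype ↥Kmod := Fintype.ofFinite _
      have hN2 : 2 ≤ q ^ h2 := le_trans hq2 (Nat.le_self_pow (by omega) q)
      have hPm : (Polynomial.X ^ (q ^ h2) - Polynomial.X : Polynomial Fqm).Monic := by
        refine Polynomial.monic_X_pow_sub ?_
        rw [Polynomial.degree_X]
        exact_mod_cast hN2
      have hP0 : (Polynomial.X ^ (q ^ h2) - Polynomial.X : Polynomial Fqm) ≠ 0 := hPm.ne_zero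
      have hdeg : (Polynomial.X ^ (q ^ h2) - Polynomial.X : Polynomial Fqm).natDegree
          ≤ q ^ h2 := by
        refine le_trans (Polynomial.natDegree_sub_le _ _) ?_
        simp [Polynomial.natDegree_X_pow, Polynomial.natDegree_X]
        omega
      have hsubset : ∀ z : Fqm, z ∈ Kmod →
          z ∈ (Polynomial.X ^ (q ^ h2) - Polynomial.X : Polynomial Fqm).roots.toFinset := by
        intro z hz
        rw [Multiset.mem_toFinset, Polynomial.mem_roots hP0]
        show Polynomial.IsRoot _ _
        have hz' : z ^ q ^ h2 = z := hz
        simp [Polynomial.IsRoot, sub_eq_zero, hz']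
      have hcardK : Fintype.card ↥Kmod ≤ q ^ h2 := by
        have h1 : (Finset.univ : Finset ↥Kmod).card
            ≤ (Polynomial.X ^ (q ^ h2) - Polynomial.X : Polynomial Fqm).roots.toFinset.card :=
          Finset.card_le_card_of_injOn (fun z => (z : Fqm))
            (fun z _ => hsubset z z.2) (fun a _ b _ h => Subtype.ext h)
        rw [Finset.card_univ] at h1
        exact le_trans h1 (le_trans (Multiset.toFinset_card_le _)
          (le_trans (Polynomial.card_roots' _) hdeg))
      have hKpow := card_eq_pow_finrank (K := Fq) (V := ↥Kmod)
      rw [hq] at hKpow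
      rw [hKpow] at hcardK
      exact (Nat.pow_le_pow_iff_right hq2).mp hcardK
    have hBd : Bdiag = ⨆ i ∈ (Finset.univ : Finset (Fin k)), Kmod.map (ψ i) := by
      simp
      rfl
    rw [hBd]
    refine le_trans (finrank_biSup_le _ _) ?_
    refine le_trans (Finset.sum_le_card_nsmul _ _ h2 fun i _ =>
      le_trans (Submodule.finrank_map_le _ _) hKrank) ?_
    simp [Finset.card_univ, smul_eq_mul]
  -- key membership
  have key : ∀ u, u ∈ C → ∀ v, v ∈ C →
      trv q m u * trv q m v ∈ A0 ⊔ ((⨆ δ ∈ Finset.Ico 1 ((m+1)/2), AD δ)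
        ⊔ (if 2 ∣ m then Boff ⊔ Bdiag else ⊥)) := by
    intro u hu v hv
    rw [trv_mul_expand]
    refine Submodule.sum_mem _ fun δ hδ => ?_
    rw [Finset.mem_range] at hδ
    rcases Nat.eq_zero_or_pos δ with h0 | hpos
    · subst h0
      refine Submodule.mem_sup_left ?_
      refine Submodule.subset_span ⟨u * pwv q 0 v, ?_, rfl⟩
      have hv0 : pwv q 0 v = v := by
        funext t
        show v t ^ q ^ 0 = v t
        simp
      rw [hv0]
      exact Submodule.subset_span ⟨u, hu, v, hv, rfl⟩
    rcases lt_trichotomy (2 * δ) m with hlt | heq | hgt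
    · have hADbase : ∀ (i j : Fin k) (lam : Fqm),
          trv q m (lam • (e i * pwv q δ (e j))) ∈ AD δ := by
        intro i j lam
        refine helper _ _ (fun a => ?_) lam
        exact Submodule.subset_span ⟨(a, i, j), rfl⟩
      have hmem := genind (AD δ) δ hADbase v hv u hu 1
      rw [one_smul] at hmem
      refine Submodule.mem_sup_right (Submodule.mem_sup_left ?_)
      have hδmem : δ ∈ Finset.Ico 1 ((m + 1) / 2) := Finset.mem_Ico.mpr ⟨hpos, by omega⟩
      exact (le_biSup AD hδmem) hmem
    · have hdvd : 2 ∣ m := ⟨δ, heq.symm⟩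
      have hδh2 : δ = h2 := by omega
      have hmem := genind (Boff ⊔ Bdiag) h2 (memHbase hdvd) v hv u hu 1
      rw [one_smul] at hmem
      refine Submodule.mem_sup_right (Submodule.mem_sup_right ?_)
      rw [if_pos hdvd, hδh2]
      exact hmem
    · have hswap : trv q m (u * pwv q δ v) = trv q m (v * pwv q (m - δ) u) := by
        funext t
        exact trp_swap hXq (le_of_lt hδ) (u t) (v t)
      rw [hswap]
      have hADbase : ∀ (i j : Fin k) (lam : Fqm),
          trv q m (lam • (e i * pwv q (m - δ) (e j))) ∈ AD (m - δ) := by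
        intro i j lam
        refine helper _ _ (fun a => ?_) lam
        exact Submodule.subset_span ⟨(a, i, j), rfl⟩
      have hmem := genind (AD (m - δ)) (m - δ) hADbase u hu v hv 1
      rw [one_smul] at hmem
      refine Submodule.mem_sup_right (Submodule.mem_sup_left ?_)
      have hδmem : m - δ ∈ Finset.Ico 1 ((m + 1) / 2) := Finset.mem_Ico.mpr ⟨by omega, by omega⟩
      exact (le_biSup AD hδmem) hmem
  -- the containment
  have hsub : schurProd Fq (traceCode q m Fq C) (traceCode q m Fq C) ≤
      A0 ⊔ ((⨆ δ ∈ Finset.Ico 1 ((m+1)/2), AD δ)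
        ⊔ (if 2 ∣ m then Boff ⊔ Bdiag else ⊥)) := by
    refine Submodule.span_le.mpr ?_
    rintro x ⟨c, hc, dd, hdd, rfl⟩
    revert dd
    induction hc using Submodule.span_induction with
    | mem c0 hc0 =>
        obtain ⟨u, hu, rfl⟩ := hc0
        intro dd hdd
        induction hdd using Submodule.span_induction with
        | mem d0 hd0 =>
            obtain ⟨v, hv, rfl⟩ := hd0
            exact key u hu v hv
        | zero =>
            rw [mul_zero]
            exact Submodule.zero_mem _
        | add y z _ _ ihy ihz =>
            rw [mul_add]
            exact Submodule.add_mem _ ihy ihz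
        | smul c' y _ ih =>
            rw [mul_smul_comm]
            exact Submodule.smul_mem _ c' ih
    | zero =>
        intro dd _
        rw [zero_mul]
        exact Submodule.zero_mem _
    | add y z _ _ ihy ihz =>
        intro dd hdd
        rw [add_mul]
        exact Submodule.add_mem _ (ihy dd hdd) (ihz dd hdd)
    | smul c' y _ ih =>
        intro dd hdd
        rw [smul_mul_assoc]
        exact Submodule.smul_mem _ c' (ih dd hdd)
  -- assembling ranks
  have hrank := Submodule.finrank_mono hsub
  have t1 : finrank Fq ↥(A0 ⊔ ((⨆ δ ∈ Finset.Ico 1 ((m+1)/2), AD δ)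
        ⊔ (if 2 ∣ m then Boff ⊔ Bdiag else ⊥)))
      ≤ finrank Fq ↥A0 + (finrank Fq ↥(⨆ δ ∈ Finset.Ico 1 ((m+1)/2), AD δ)
        + finrank Fq ↥(if 2 ∣ m then Boff ⊔ Bdiag else ⊥)) :=
    le_trans (Submodule.finrank_add_le_finrank_add_finrank _ _)
      (Nat.add_le_add_left (Submodule.finrank_add_le_finrank_add_finrank _ _) _)
  have hmid : finrank Fq ↥(⨆ δ ∈ Finset.Ico 1 ((m+1)/2), AD δ)
      ≤ ((m+1)/2 - 1) * (m * (k * k)) := by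
    refine le_trans (finrank_biSup_le _ _) ?_
    refine le_trans (Finset.sum_le_card_nsmul _ _ (m * (k * k)) fun δ _ => rAD δ) ?_
    rw [Nat.card_Ico, smul_eq_mul]
  by_cases hdvd : 2 ∣ m
  · -- even case
    obtain ⟨hp, hmhp⟩ := hdvd
    have hdvd : 2 ∣ m := ⟨hp, hmhp⟩
    have hh2 : h2 = hp := by omega
    have hppos : 1 ≤ hp := by omega
    have hEh : finrank Fq ↥(if 2 ∣ m then Boff ⊔ Bdiag else ⊥)
        ≤ finrank Fq ↥Boff + k * h2 := by
      rw [if_pos hdvd]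
      exact le_trans (Submodule.finrank_add_le_finrank_add_finrank _ _)
        (Nat.add_le_add_left (rBdiag hdvd) _)
    have hc1 : (m+1)/2 - 1 = hp - 1 := by omega
    have hfin : finrank Fq ↥(schurProd Fq (traceCode q m Fq C) (traceCode q m Fq C))
        ≤ m * (k + s) + (hp - 1) * (m * (k * k)) + finrank Fq ↥Boff + k * hp := by
      rw [← hc1, ← hh2]
      linarith
    -- integer arithmetic
    have hfz : (finrank Fq ↥(schurProd Fq (traceCode q m Fq C) (traceCode q m Fq C)) : ℤ)
        ≤ (m : ℤ) * (k + s) + ((hp : ℤ) - 1) * (m * (k * k))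
          + (finrank Fq ↥Boff : ℤ) + k * hp := by
      have := (Nat.cast_le (α := ℤ)).mpr hfin
      push_cast [Nat.cast_sub hppos] at this
      convert this using 2
    have hBz : 2 * (finrank Fq ↥Boff : ℤ) + m * k ≤ (m : ℤ) * (k * k) := by
      exact_mod_cast rBoff
    have hmz : (m : ℤ) = 2 * hp := by exact_mod_cast hmhp
    have e1 : (m : ℤ) * k = 2 * hp * k := by rw [hmz]
    have e2 : (m : ℤ) * s = 2 * hp * s := by rw [hmz]
    have e3 : (m : ℤ) * (k * k) = 2 * hp * (k * k) := by rw [hmz]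
    have e4 : (m : ℤ) * k * (m * k) = 4 * (hp * hp) * (k * k) := by rw [hmz]; ring
    have e5 : (hp : ℤ) * (m * (k * k)) = 2 * (hp * hp) * (k * k) := by rw [hmz]; ring
    linarith [hfz, hBz, e1, e2, e3, e4, e5]
  · -- odd case
    have hodd : m % 2 = 1 := by omega
    obtain ⟨t0, hmt⟩ : ∃ t0, m = 2 * t0 + 1 := ⟨m / 2, by omega⟩
    have hEh : finrank Fq ↥(if 2 ∣ m then Boff ⊔ Bdiag else ⊥) = 0 := by
      rw [if_neg hdvd]
      exact finrank_bot Fq _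
    have hc1 : (m+1)/2 - 1 = t0 := by omega
    have hfin : finrank Fq ↥(schurProd Fq (traceCode q m Fq C) (traceCode q m Fq C))
        ≤ m * (k + s) + t0 * (m * (k * k)) := by
      rw [← hc1]
      linarith
    have hfz : (finrank Fq ↥(schurProd Fq (traceCode q m Fq C) (traceCode q m Fq C)) : ℤ)
        ≤ (m : ℤ) * (k + s) + (t0 : ℤ) * (m * (k * k)) := by
      exact_mod_cast hfin
    have hmz : (m : ℤ) = 2 * t0 + 1 := by exact_mod_cast hmt
    have e1 : (m : ℤ) * k = 2 * (t0 * k) + k := by rw [hmz]; ring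
    have e2 : (m : ℤ) * s = 2 * (t0 * s) + s := by rw [hmz]; ring
    have e3 : (m : ℤ) * (k * k) = 2 * (t0 * (k * k)) + k * k := by rw [hmz]; ring
    have e4 : (m : ℤ) * k * (m * k) = 4 * (t0 * t0 * (k * k)) + 4 * (t0 * (k * k)) + k * k := by
      rw [hmz]; ring
    have e5 : (t0 : ℤ) * (m * (k * k)) = 2 * (t0 * t0 * (k * k)) + t0 * (k * k) := by
      rw [hmz]; ring
    linarith [hfz, e1, e2, e3, e4, e5]
end

section
/- Let C, D ⊆ F_{q^m}^n be F_{q^m}-linear codes with D ⊆ C and such that for every d ∈ D, the coordinatewise q-th power d^q := (d_1^q, …, d_n^q) belongs to C. Then for every integer i ≥ 1: Tr(C ⋆ D^{q^i}) ⊆ Tr(C ⋆ C^{q^i}) ∩ Tr(C ⋆ C^{q^{i−1}}). -/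
open Module

theorem traceCode_mono (q m : ℕ) (Fq : Type*) [Field Fq] {Fqm : Type*} [Field Fqm]
    [Algebra Fq Fqm] {n : ℕ} {E E' : Submodule Fqm (Fin n → Fqm)} (h : E ≤ E') :
    traceCode q m Fq E ≤ traceCode q m Fq E' :=
  Submodule.span_mono fun _ ⟨c, hc, hx⟩ => ⟨c, h hc, hx⟩

theorem schurProd_mono_right (R : Type*) {A : Type*} [CommSemiring R] [CommSemiring A]
    [Algebra R A] (C : Submodule R A) {E E' : Submodule R A} (h : E ≤ E') :
    schurProd R C E ≤ schurProd R C E' :=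
  Submodule.span_mono fun _ ⟨c, hc, d, hd, hx⟩ => ⟨c, hc, d, h hd, hx⟩

section powCode

variable {K : Type*} [Field K] {n : ℕ}

theorem powCode_mono {C D : Submodule K (Fin n → K)} (h : D ≤ C) (r : ℕ) :
    powCode D r ≤ powCode C r :=
  Submodule.span_mono fun _ ⟨d, hd, hx⟩ => ⟨d, h hd, hx⟩

theorem powCode_mul_le_of_pow_mem {C D : Submodule K (Fin n → K)} {s : ℕ}
    (hD : ∀ d ∈ D, (fun j => d j ^ s) ∈ C) (r : ℕ) :
    powCode D (s * r) ≤ powCode C r := by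
  rw [powCode, Submodule.span_le]
  rintro _ ⟨d, hd, rfl⟩
  exact Submodule.subset_span ⟨_, hD d hd, by simp only [pow_mul]⟩

end powCode

theorem stmt_9_general (q m n : ℕ) (Fq Fqm : Type*) [Field Fq] [Field Fqm]
    [Algebra Fq Fqm]
    (C D : Submodule Fqm (Fin n → Fqm)) (hDC : D ≤ C)
    (hDq : ∀ d ∈ D, (fun j => d j ^ q) ∈ C) :
    ∀ i : ℕ, 1 ≤ i →
      traceCode q m Fq (schurProd Fqm C (powCode D (q ^ i))) ≤
        traceCode q m Fq (schurProd Fqm C (powCode C (q ^ i))) ⊓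
          traceCode q m Fq (schurProd Fqm C (powCode C (q ^ (i - 1)))) := by
  intro i hi
  have hpow : q ^ i = q * q ^ (i - 1) := by
    rw [← pow_succ', Nat.sub_add_cancel hi]
  refine le_inf ?_ ?_
  · exact traceCode_mono q m Fq (schurProd_mono_right Fqm C (powCode_mono hDC _))
  · rw [hpow]
    exact traceCode_mono q m Fq (schurProd_mono_right Fqm C (powCode_mul_le_of_pow_mem hDq _))

/-- Let `C, D ⊆ F_{q^m}^n` be `F_{q^m}`-linear codes with `D ⊆ C` and such that for
every `d ∈ D` the coordinatewise `q`-th power `d^q` belongs to `C`. Then for every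
integer `i ≥ 1`, `Tr(C ⋆ D^{q^i}) ⊆ Tr(C ⋆ C^{q^i}) ∩ Tr(C ⋆ C^{q^{i−1}})`. -/
theorem stmt_9 (q m n : ℕ) (hm : 0 < m) (Fq Fqm : Type*) [Field Fq] [Field Fqm]
    [Fintype Fq] [Fintype Fqm] [Algebra Fq Fqm]
    (hq : Fintype.card Fq = q) (hqm : Fintype.card Fqm = q ^ m)
    (C D : Submodule Fqm (Fin n → Fqm)) (hDC : D ≤ C)
    (hDq : ∀ d ∈ D, (fun j => d j ^ q) ∈ C) :
    ∀ i : ℕ, 1 ≤ i →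
      traceCode q m Fq (schurProd Fqm C (powCode D (q ^ i))) ≤
        traceCode q m Fq (schurProd Fqm C (powCode C (q ^ i))) ⊓
          traceCode q m Fq (schurProd Fqm C (powCode C (q ^ (i - 1)))) :=
  stmt_9_general q m n Fq Fqm C D hDC hDq
end

section
/- Let F be a field and let a, b be coprime positive integers. Let P ∈ F[x,y] be an irreducible polynomial of the form P = c·y^a + d·x^b + Σ e_{ij}·x^i·y^j, where c, d ∈ F are nonzero and the sum ranges over pairs (i,j) of nonnegative integers with a·i + b·j < a·b. Let β ≥ 0 and 0 ≤ α ≤ a−1 be integers, and let g ∈ F[x,y] be of the form g = x^β·y^α + g', where every monomial x^u·y^v occurring in g' satisfies v ≤ a−1 and a·u + b·v < a·β + b·α. Then for every f ∈ F[x,y] all of whose monomials x^u·y^v satisfy v ≤ a−1, there exist f₁, h, f₂ ∈ F[x,y] such that (i) f = f₁·g + h·P + f₂, (ii) every monomial x^u·y^v occurring in f₂ satisfies u ≤ β + b − 1, v ≤ a−1, and not both u ≥ β and v ≥ α, and (iii) either f₂ = 0 or max{a·u + b·v : x^u·y^v occurs in f₂} ≤ max{a·u + b·v : x^u·y^v occurs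 in f}. -/
open MvPolynomial

namespace Stmt10Aux

variable {F : Type*} [Field F]

/-- `Good a b β α g P W q` means `q` admits a division `q = f₁ g + h P + f₂`
with remainder `f₂` supported in `R(g)` and of weighted degree at most `W`. -/
def Good (a b β α : ℕ) (g P : MvPolynomial (Fin 2) F) (W : ℕ)
    (q : MvPolynomial (Fin 2) F) : Prop :=
  ∃ f₁ h f₂ : MvPolynomial (Fin 2) F,
    q = f₁ * g + h * P + f₂ ∧
    (∀ s ∈ f₂.support, s 0 ≤ β + b - 1 ∧ s 1 ≤ a - 1 ∧ ¬(β ≤ s 0 ∧ α ≤ s 1)) ∧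
    ∀ s ∈ f₂.support, a * s 0 + b * s 1 ≤ W

variable {a b β α : ℕ} {g P : MvPolynomial (Fin 2) F}

theorem good_of_eq {W : ℕ} {q q' : MvPolynomial (Fin 2) F} (h : q = q')
    (hq : Good a b β α g P W q') : Good a b β α g P W q := h ▸ hq

theorem good_mono {W W' : ℕ} (hWW : W ≤ W') {q : MvPolynomial (Fin 2) F}
    (hq : Good a b β α g P W q) : Good a b β α g P W' q := by
  obtain ⟨f₁, h, f₂, h1, h2, h3⟩ := hq
  exact ⟨f₁, h, f₂, h1, h2, fun s hs => le_trans (h3 s hs) hWW⟩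

theorem good_mulg {W : ℕ} (q₀ : MvPolynomial (Fin 2) F) :
    Good a b β α g P W (q₀ * g) := by
  refine ⟨q₀, 0, 0, by ring, ?_, ?_⟩ <;> simp

theorem good_mulP {W : ℕ} (q₀ : MvPolynomial (Fin 2) F) :
    Good a b β α g P W (q₀ * P) := by
  refine ⟨0, q₀, 0, by ring, ?_, ?_⟩ <;> simp

theorem good_add {W : ℕ} {q₁ q₂ : MvPolynomial (Fin 2) F}
    (h₁ : Good a b β α g P W q₁) (h₂ : Good a b β α g P W q₂) :
    Good a b β α g P W (q₁ + q₂) := by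
  obtain ⟨x₁, y₁, z₁, e₁, r₁, w₁⟩ := h₁
  obtain ⟨x₂, y₂, z₂, e₂, r₂, w₂⟩ := h₂
  refine ⟨x₁ + x₂, y₁ + y₂, z₁ + z₂, by rw [e₁, e₂]; ring, ?_, ?_⟩ <;>
  · intro s hs
    rcases Finset.mem_union.1 (MvPolynomial.support_add hs) with hs' | hs'
    · first | exact r₁ s hs' | exact w₁ s hs'
    · first | exact r₂ s hs' | exact w₂ s hs'

theorem good_smul {W : ℕ} (r : F) {q : MvPolynomial (Fin 2) F}
    (hq : Good a b β α g P W q) : Good a b β α g P W (C r * q) := by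
  obtain ⟨x, y, z, e, hr, hw⟩ := hq
  refine ⟨C r * x, C r * y, C r * z, by rw [e]; ring, ?_, ?_⟩ <;>
  · intro s hs
    rw [← MvPolynomial.smul_eq_C_mul] at hs
    have hs' := MvPolynomial.support_smul hs
    first | exact hr s hs' | exact hw s hs'

theorem good_neg {W : ℕ} {q : MvPolynomial (Fin 2) F}
    (hq : Good a b β α g P W q) : Good a b β α g P W (-q) := by
  have := good_smul (-1 : F) hq
  rwa [map_neg, map_one, neg_one_mul] at this

theorem good_sum {W : ℕ} {ι : Type*} (S : Finset ι)
    (q : ι → MvPolynomial (Fin 2) F)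
    (hq : ∀ i ∈ S, Good a b β α g P W (q i)) :
    Good a b β α g P W (∑ i ∈ S, q i) := by
  classical
  induction S using Finset.induction_on with
  | empty => exact good_of_eq (by simp) (good_mulg 0 (W := W))
  | insert i S' hnot ih =>
      rw [Finset.sum_insert hnot]
      exact good_add (hq i (Finset.mem_insert_self _ _))
        (ih fun j hj => hq j (Finset.mem_insert_of_mem hj))

theorem good_monomul {W : ℕ} (m : Fin 2 →₀ ℕ) (q : MvPolynomial (Fin 2) F)
    (hq : ∀ s ∈ q.support, Good a b β α g P W (monomial (m + s) (1 : F))) :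
    Good a b β α g P W (monomial m (1 : F) * q) := by
  have hrep : monomial m (1 : F) * q
      = ∑ s ∈ q.support, C (q.coeff s) * monomial (m + s) (1 : F) := by
    conv_lhs => rw [← MvPolynomial.support_sum_monomial_coeff q]
    rw [Finset.mul_sum]
    refine Finset.sum_congr rfl fun s hs => ?_
    rw [MvPolynomial.monomial_mul, MvPolynomial.C_mul_monomial]
    ring_nf
  exact good_of_eq hrep (good_sum _ _ fun s hs => good_smul _ (hq s hs))

theorem good_of_support {W : ℕ} {q : MvPolynomial (Fin 2) F}
    (hq : ∀ s ∈ q.support, Good a b β α g P W (monomial s (1 : F))) :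
    Good a b β α g P W q := by
  have hrep : q = ∑ s ∈ q.support, C (q.coeff s) * monomial s (1 : F) := by
    conv_lhs => rw [← MvPolynomial.support_sum_monomial_coeff q]
    refine Finset.sum_congr rfl fun s hs => ?_
    rw [MvPolynomial.C_mul_monomial, mul_one]
  exact good_of_eq hrep (good_sum _ _ fun s hs => good_smul _ (hq s hs))

theorem fin2_eq (t : Fin 2 →₀ ℕ) :
    t = Finsupp.single 0 (t 0) + Finsupp.single 1 (t 1) := by
  ext i; fin_cases i <;> simp [Finsupp.single_apply]

theorem add_single_eq (m : Fin 2 →₀ ℕ) (u v : ℕ) :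
    (Finsupp.single 0 u + Finsupp.single 1 v : Fin 2 →₀ ℕ) + m
      = Finsupp.single 0 (u + m 0) + Finsupp.single 1 (v + m 1) := by
  ext i; fin_cases i <;> simp [Finsupp.single_apply]

theorem sap0 (u v : ℕ) :
    (Finsupp.single 0 u + Finsupp.single 1 v : Fin 2 →₀ ℕ) 0 = u := by
  simp [Finsupp.single_apply]

theorem sap1 (u v : ℕ) :
    (Finsupp.single 0 u + Finsupp.single 1 v : Fin 2 →₀ ℕ) 1 = v := by
  simp [Finsupp.single_apply]

theorem mono_xy (u v : ℕ) :
    (X 0 : MvPolynomial (Fin 2) F) ^ u * X 1 ^ v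
      = monomial (Finsupp.single 0 u + Finsupp.single 1 v) (1 : F) := by
  rw [MvPolynomial.X_pow_eq_monomial, MvPolynomial.X_pow_eq_monomial,
    MvPolynomial.monomial_mul, one_mul]

theorem measure_lt {w' v' w v n : ℕ} (h1 : w' < w) (h2 : v' ≤ w')
    (h3 : w*(w+1)+v < n+1) : w'*(w'+1)+v' < n := by
  have h4 : (w'+1)*(w'+2) ≤ w*(w+1) := Nat.mul_le_mul (by omega) (by omega)
  nlinarith

end Stmt10Aux

open Stmt10Aux

set_option maxHeartbeats 1000000 in
/-- Weighted Euclidean division modulo a `C_{a,b}` curve equation.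
Here `F[x,y] = MvPolynomial (Fin 2) F` with `x = X 0`, `y = X 1`; a monomial
`x^u·y^v` occurs in `f` iff the exponent vector lies in `f.support`. -/
theorem stmt_10 (F : Type*) [Field F] (a b : ℕ) (ha : 0 < a) (hb : 0 < b)
    (hab : Nat.Coprime a b)
    (c d : F) (hc : c ≠ 0) (hd : d ≠ 0)
    (E : MvPolynomial (Fin 2) F)
    (hE : ∀ t ∈ E.support, a * t 0 + b * t 1 < a * b)
    (P : MvPolynomial (Fin 2) F)
    (hP : P = C c * X 1 ^ a + C d * X 0 ^ b + E)
    (hPirr : Irreducible P)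
    (β α : ℕ) (hα : α ≤ a - 1)
    (g' : MvPolynomial (Fin 2) F)
    (hg' : ∀ t ∈ g'.support, t 1 ≤ a - 1 ∧ a * t 0 + b * t 1 < a * β + b * α)
    (g : MvPolynomial (Fin 2) F)
    (hg : g = X 0 ^ β * X 1 ^ α + g')
    (f : MvPolynomial (Fin 2) F)
    (hf : ∀ t ∈ f.support, t 1 ≤ a - 1) :
    ∃ f₁ h f₂ : MvPolynomial (Fin 2) F,
      f = f₁ * g + h * P + f₂ ∧
      (∀ t ∈ f₂.support, t 0 ≤ β + b - 1 ∧ t 1 ≤ a - 1 ∧ ¬(β ≤ t 0 ∧ α ≤ t 1)) ∧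
      (f₂ = 0 ∨
        f₂.support.sup (fun t => a * t 0 + b * t 1) ≤
          f.support.sup (fun t => a * t 0 + b * t 1)) := by
  classical
  -- the key monomial-by-monomial division, by strong induction on the
  -- measure ν(u,v) = (a u + b v)(a u + b v + 1) + v
  have key : ∀ n u v : ℕ, (a*u+b*v)*(a*u+b*v+1)+v < n →
      Good a b β α g P (a*u+b*v) ((X 0 : MvPolynomial (Fin 2) F) ^ u * X 1 ^ v) := by
    intro n
    induction n with
    | zero => omega
    | succ n ih =>
      intro u v hn
      -- helper: reduce any monomial of strictly smaller weighted degree via ih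
      have ihm : ∀ u' v' : ℕ, a*u'+b*v' < a*u+b*v →
          Good a b β α g P (a*u+b*v)
            (monomial (Finsupp.single 0 u' + Finsupp.single 1 v') (1 : F)) := by
        intro u' v' hlt
        have hv' : v' ≤ a*u'+b*v' :=
          le_trans (Nat.le_mul_of_pos_left v' hb) (Nat.le_add_left _ _)
        have hν : (a*u'+b*v')*(a*u'+b*v'+1)+v' < n := measure_lt hlt hv' hn
        exact good_mono (le_of_lt hlt) (good_of_eq (mono_xy u' v').symm (ih u' v' hν))
      by_cases hC : a ≤ v
      · -- rule C : reduce y^a with P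
        obtain ⟨v'', rfl⟩ : ∃ v'', v = v'' + a := ⟨v - a, by omega⟩
        have hid : C c * ((X 0 : MvPolynomial (Fin 2) F) ^ u * X 1 ^ (v'' + a))
            = (X 0 ^ u * X 1 ^ v'') * P
              + (-(C d * (X 0 ^ (u+b) * X 1 ^ v'')))
              + (-((X 0 ^ u * X 1 ^ v'') * E)) := by
          rw [hP]; ring
        have hgood : Good a b β α g P (a*u+b*(v''+a))
            (C c * ((X 0 : MvPolynomial (Fin 2) F) ^ u * X 1 ^ (v''+a))) := by
          refine good_of_eq hid (good_add (good_add (good_mulP _) (good_neg ?_)) (good_neg ?_))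
          · -- the monomial x^{u+b} y^{v''} : same weight, smaller y-degree
            have hw : a*(u+b)+b*v'' = a*u+b*(v''+a) := by ring
            have hν : (a*(u+b)+b*v'')*(a*(u+b)+b*v''+1)+v'' < n := by
              rw [hw]; omega
            have h1 := good_of_eq (mono_xy (u+b) v'').symm (ih (u+b) v'' hν)
            rw [hw] at h1
            exact good_of_eq (by rw [mono_xy]) (good_smul d h1)
          · -- the E part : strictly smaller weight
            rw [mono_xy]
            refine good_monomul _ _ fun s hs => ?_
            have hEs := hE s hs
            rw [add_single_eq]
            refine ihm (u + s 0) (v'' + s 1) ?_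
            have e1 : a*(u + s 0)+b*(v'' + s 1) = (a*u+b*v'') + (a*s 0+b*s 1) := by ring
            have e2 : a*u+b*(v''+a) = (a*u+b*v'') + a*b := by ring
            omega
        have := good_smul c⁻¹ hgood
        rwa [← mul_assoc, ← C_mul, inv_mul_cancel₀ hc, C_1, one_mul] at this
      · push_neg at hC
        by_cases hA : β ≤ u ∧ α ≤ v
        · -- rule A : reduce with g
          obtain ⟨hβu, hαv⟩ := hA
          obtain ⟨u', rfl⟩ : ∃ u', u = u' + β := ⟨u - β, by omega⟩
          obtain ⟨v', rfl⟩ : ∃ v', v = v' + α := ⟨v - α, by omega⟩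
          have hid : (X 0 : MvPolynomial (Fin 2) F) ^ (u'+β) * X 1 ^ (v'+α)
              = (X 0 ^ u' * X 1 ^ v') * g + (-((X 0 ^ u' * X 1 ^ v') * g')) := by
            rw [hg]; ring
          refine good_of_eq hid (good_add (good_mulg _) (good_neg ?_))
          rw [mono_xy]
          refine good_monomul _ _ fun s hs => ?_
          have hgs := (hg' s hs).2
          rw [add_single_eq]
          refine ihm (u' + s 0) (v' + s 1) ?_
          have e1 : a*(u' + s 0)+b*(v' + s 1) = (a*u'+b*v') + (a*s 0+b*s 1) := by ring
          have e2 : a*(u'+β)+b*(v'+α) = (a*u'+b*v') + (a*β+b*α) := by ring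
          omega
        · by_cases hu : u ≤ β + b - 1
          · -- base case : the monomial already lies in R(g)
            refine ⟨0, 0, monomial (Finsupp.single 0 u + Finsupp.single 1 v) 1,
              by rw [mono_xy]; ring, ?_, ?_⟩ <;>
              intro s hs <;>
              rw [MvPolynomial.support_monomial, if_neg one_ne_zero,
                Finset.mem_singleton] at hs <;>
              subst hs <;>
              simp only [sap0, sap1] <;>
              [exact ⟨hu, by omega, hA⟩; omega]
          · -- rule B : u ≥ β + b, reduce with P then with g
            have hβb : β + b ≤ u := by omega
            obtain ⟨u'', rfl⟩ : ∃ u'', u = u'' + b := ⟨u - b, by omega⟩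
            have hβu'' : β ≤ u'' := by omega
            obtain ⟨u₂, hu₂⟩ : ∃ u₂, u'' = u₂ + β := ⟨u'' - β, by omega⟩
            obtain ⟨v₂, hv₂⟩ : ∃ v₂, v + a = v₂ + α := ⟨v + a - α, by omega⟩
            have h3 : (X 0 : MvPolynomial (Fin 2) F) ^ u'' * X 1 ^ (v + a)
                = (X 0 ^ u₂ * X 1 ^ v₂) * (X 0 ^ β * X 1 ^ α) := by
              rw [hu₂, hv₂]; ring
            have hid : C d * ((X 0 : MvPolynomial (Fin 2) F) ^ (u''+b) * X 1 ^ v)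
                = (X 0 ^ u'' * X 1 ^ v) * P
                  + (-((C c * (X 0 ^ u₂ * X 1 ^ v₂)) * g))
                  + (C c * ((X 0 ^ u₂ * X 1 ^ v₂) * g'))
                  + (-((X 0 ^ u'' * X 1 ^ v) * E)) := by
              rw [hP, hg]
              linear_combination (-(C c) : MvPolynomial (Fin 2) F) * h3
            have hgood : Good a b β α g P (a*(u''+b)+b*v)
                (C d * ((X 0 : MvPolynomial (Fin 2) F) ^ (u''+b) * X 1 ^ v)) := by
              refine good_of_eq hid (good_add (good_add (good_add (good_mulP _)
                (good_neg (good_mulg _))) ?_) (good_neg ?_))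
              · -- the g' part
                refine good_smul c ?_
                rw [mono_xy]
                refine good_monomul _ _ fun s hs => ?_
                have hgs := (hg' s hs).2
                rw [add_single_eq]
                refine ihm (u₂ + s 0) (v₂ + s 1) ?_
                have h1 : a * u'' = a * u₂ + a * β := by rw [hu₂]; ring
                have h2 : b * v₂ + b * α = b * v + a * b := by
                  rw [← Nat.mul_add, ← hv₂]; ring
                have e1 : a*(u₂ + s 0)+b*(v₂ + s 1) = (a*u₂+b*v₂) + (a*s 0+b*s 1) := by
                  ring
                have e2 : a*(u''+b)+b*v = a*u'' + a*b + b*v := by ring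
                omega
              · -- the E part
                rw [mono_xy]
                refine good_monomul _ _ fun s hs => ?_
                have hEs := hE s hs
                rw [add_single_eq]
                refine ihm (u'' + s 0) (v + s 1) ?_
                have e1 : a*(u'' + s 0)+b*(v + s 1) = (a*u''+b*v) + (a*s 0+b*s 1) := by
                  ring
                have e2 : a*(u''+b)+b*v = (a*u''+b*v) + a*b := by ring
                omega
            have := good_smul d⁻¹ hgood
            rwa [← mul_assoc, ← C_mul, inv_mul_cancel₀ hd, C_1, one_mul] at this
  -- assemble: divide each monomial of f
  obtain ⟨f₁, h, f₂, heq, hRf, hWf⟩ :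
      Good a b β α g P (f.support.sup fun t => a * t 0 + b * t 1) f := by
    refine good_of_support fun t ht => ?_
    have hkey := key ((a * t 0 + b * t 1)*(a * t 0 + b * t 1 + 1) + t 1 + 1)
      (t 0) (t 1) (by omega)
    rw [mono_xy, ← fin2_eq t] at hkey
    exact good_mono (Finset.le_sup (f := fun t => a * t 0 + b * t 1) ht) hkey
  exact ⟨f₁, h, f₂, heq, hRf, Or.inr (Finset.sup_le hWf)⟩
end

section
/- Let a, b be positive integers, S, S' nonnegative integers, and let α' and β' be nonnegative integers with α' ≤ a−1 and a·β' + b·α' = S'. If S' ≤ S + 1 − (a−1)(b−1), then every pair (u,v) ∈ ℕ × ℕ with u ≤ β' + b − 1, v ≤ a − 1, and not both u ≥ β' and v ≥ α', satisfies a·u + b·v ≤ S. (Consequently the remainder set R is contained in the monomial set of L(S·P_∞), so M = R in case (2) of the paper's Proposition; note 2·g_{a,b} = (a−1)(b−1) where g_{a,b} is the genus of the C_{a,b} curve.) -/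
/-!
A point `(u, v)` of the remainder set lies strictly below the box corner `(β' + b, a)` in both
coordinates, and strictly below `β'` or `α'` in one of them. Hence
`a (u + 1) + b (v + 1) ≤ a β' + b α' + a b = S' + a b`, and `S' + (a - 1)(b - 1) ≤ S + 1`
turns this into `a u + b v ≤ S`.
-/

theorem mul_add_one_add_mul_add_one_le {a b α β u v : ℕ} (hu : u + 1 ≤ β + b) (hv : v + 1 ≤ a)
    (hR : u + 1 ≤ β ∨ v + 1 ≤ α) :
    a * (u + 1) + b * (v + 1) ≤ a * β + b * α + a * b := by
  rcases hR with hβ | hα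
  · calc a * (u + 1) + b * (v + 1) ≤ a * β + b * a :=
          add_le_add (Nat.mul_le_mul_left a hβ) (Nat.mul_le_mul_left b hv)
      _ ≤ a * β + b * α + a * b := by rw [mul_comm b a]; omega
  · calc a * (u + 1) + b * (v + 1) ≤ a * (β + b) + b * α :=
          add_le_add (Nat.mul_le_mul_left a hu) (Nat.mul_le_mul_left b hα)
      _ = a * β + b * α + a * b := by ring

theorem stmt_13_general (a b S S' α' β' : ℕ) (ha : 0 < a) (hb : 0 < b)
    (hS' : a * β' + b * α' = S')
    (h : (S' : ℤ) ≤ (S : ℤ) + 1 - ((a : ℤ) - 1) * ((b : ℤ) - 1)) :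
    ∀ u v : ℕ, u ≤ β' + b - 1 → v ≤ a - 1 → ¬(β' ≤ u ∧ α' ≤ v) →
      a * u + b * v ≤ S := by
  intro u v hu hv hR
  have key : a * (u + 1) + b * (v + 1) ≤ S' + a * b :=
    hS' ▸ mul_add_one_add_mul_add_one_le (by omega) (by omega) (by omega)
  zify at key ⊢
  linear_combination key + h

/-- Case (2) of the paper's Proposition on `M_i(s,g)`: if `S' ≤ S + 1 − (a−1)(b−1)` then
every lattice point `(u,v)` of the remainder set `R` lies in the monomial set of `L(S·P_∞)`. -/
theorem stmt_13 (a b S S' α' β' : ℕ) (ha : 0 < a) (hb : 0 < b)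
    (hα' : α' ≤ a - 1) (hS' : a * β' + b * α' = S')
    (h : (S' : ℤ) ≤ (S : ℤ) + 1 - ((a : ℤ) - 1) * ((b : ℤ) - 1)) :
    ∀ u v : ℕ, u ≤ β' + b - 1 → v ≤ a - 1 → ¬(β' ≤ u ∧ α' ≤ v) →
      a * u + b * v ≤ S :=
  stmt_13_general a b S S' α' β' ha hb hS' h
end

section
/- Let q ≥ 2 and m ≥ 2 be integers with m even, and set q₀ := q^{m/2}. Then for every integer s' ≥ q₀(q₀−1) + q, one has m·s'·(q₀ − q^{m/2 − 1} + 1) ≥ q₀³ − 1 (note q₀ − q^{m/2−1} + 1 = q₀ − q₀/q + 1 since q divides q₀). -/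
/-!
With `a = q^{m/2}` and `b = q^{m/2-1}` one has `a = b q ≥ 2 b`, so `a - b + 1 ≥ (a + 2) / 2`,
while `s' ≥ a(a-1) + 2` and `m ≥ 2`. Hence the right-hand side is at least
`(a² - a + 2)(a + 2) = a³ + a² + 4`.
-/

lemma Nat.pow_three_sub_one_le (a : ℕ) : a ^ 3 - 1 ≤ (a * (a - 1) + 2) * (a + 2) := by
  rcases Nat.eq_zero_or_pos a with rfl | ha
  · simp
  obtain ⟨c, rfl⟩ : ∃ c, a = c + 1 := ⟨a - 1, by omega⟩
  simp only [Nat.add_sub_cancel]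
  zify [Nat.one_le_pow 3 (c + 1) ha]
  nlinarith

lemma Nat.two_mul_pow_pred_le_pow {q k : ℕ} (hq : 2 ≤ q) (hk : 1 ≤ k) :
    2 * q ^ (k - 1) ≤ q ^ k := by
  calc 2 * q ^ (k - 1) ≤ q * q ^ (k - 1) := Nat.mul_le_mul_right _ hq
    _ = q ^ k := by rw [← pow_succ']; congr 1; omega

lemma pow_three_sub_one_le_mul_mul {a b s n : ℕ} (hab : 2 * b ≤ a)
    (hs : a * (a - 1) + 2 ≤ s) (hn : 2 ≤ n) :
    a ^ 3 - 1 ≤ n * s * (a - b + 1) :=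
  calc a ^ 3 - 1 ≤ (a * (a - 1) + 2) * (a + 2) := Nat.pow_three_sub_one_le a
    _ ≤ s * (2 * (a - b + 1)) := Nat.mul_le_mul hs (by omega)
    _ = 2 * s * (a - b + 1) := by ring
    _ ≤ n * s * (a - b + 1) := by gcongr

theorem stmt_18_general (q m : ℕ) (hq : 2 ≤ q) (hm : 2 ≤ m) :
    ∀ s' : ℕ, q ^ (m / 2) * (q ^ (m / 2) - 1) + q ≤ s' →
      (q ^ (m / 2)) ^ 3 - 1 ≤ m * s' * (q ^ (m / 2) - q ^ (m / 2 - 1) + 1) := by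
  intro s' hs'
  have hb : 2 * q ^ (m / 2 - 1) ≤ q ^ (m / 2) := Nat.two_mul_pow_pred_le_pow hq (by omega)
  exact pow_three_sub_one_le_mul_mul hb (by omega) hm

/-- Hermitian-curve case `e* = m/2`: for integers `q ≥ 2`, `m ≥ 2` even and
`q₀ = q^{m/2}`, every integer `s' ≥ q₀(q₀−1) + q` satisfies
`m·s'·(q₀ − q^{m/2−1} + 1) ≥ q₀³ − 1`. -/
theorem stmt_18 (q m : ℕ) (hq : 2 ≤ q) (hm : 2 ≤ m) (hme : Even m) :
    ∀ s' : ℕ, q ^ (m / 2) * (q ^ (m / 2) - 1) + q ≤ s' →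
      (q ^ (m / 2)) ^ 3 - 1 ≤ m * s' * (q ^ (m / 2) - q ^ (m / 2 - 1) + 1) :=
  stmt_18_general q m hq hm
end
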